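/- arXiv:2307.08079 — 7 statements merged into one kernel-verified Lean document; each statement's English description precedes it below -/
import Mathlib

section
/- Let X = ε·Y where ε ~ Fréchet(0,τ,1/α₀) is independent of Y = (Σ_{k=1}^K ω_k^{1/α} Z_k)^{α₀}, with Z_k independent exponentially tilted positive-stable variables having Laplace transforms E[exp(-sZ_k)] = exp(θ_k^α - (θ_k + s)^α). Then the distribution function of X is F(x) = exp[Σ_{k: θ_k>0} θ_k^α - Σ_{k=1}^K {θ_k + (τ/x)^{1/α₀} ω_k^{1/α}}^α] for x > 0. -/
open MeasureTheory Real ProbabilityTheory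

/-- Marginal distribution function of the max-id model `X = ε ⬝ (∑ ω_k^{1/α} Z_k)^{α₀}`. -/
theorem stmt2 {Ω : Type*} [MeasurableSpace Ω] (P : Measure Ω) [IsProbabilityMeasure P]
    (K : ℕ) (α α₀ τ : ℝ) (hα : α ∈ Set.Ioo (0:ℝ) 1) (hα₀ : 0 < α₀) (hτ : 0 < τ)
    (w θ : Fin K → ℝ) (hw : ∀ k, 0 ≤ w k) (hw' : ∃ k, 0 < w k) (hθ : ∀ k, 0 ≤ θ k)
    (ε : Ω → ℝ) (Z : Fin K → Ω → ℝ)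
    (hmeasε : Measurable ε) (hmeasZ : ∀ k, Measurable (Z k))
    (hZpos : ∀ k ω, 0 < Z k ω)
    (hindep : iIndepFun
      (Sum.elim (fun _ : Unit => ε) Z) P)
    (hεcdf : ∀ x : ℝ, 0 < x →
      (P {ω | ε ω ≤ x}).toReal = Real.exp (-((τ / x) ^ (1/α₀))))
    (hZlap : ∀ k, ∀ s : ℝ, 0 ≤ s →
      ∫ ω, Real.exp (-(s * Z k ω)) ∂P = Real.exp (θ k ^ α - (θ k + s) ^ α))
    (x : ℝ) (hx : 0 < x) :
    (P {ω | ε ω * (∑ k, w k ^ (1/α) * Z k ω) ^ α₀ ≤ x}).toReal =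
      Real.exp ((∑ k ∈ Finset.univ.filter (fun k => 0 < θ k), θ k ^ α) -
        ∑ k, (θ k + (τ / x) ^ (1/α₀) * w k ^ (1/α)) ^ α) := by
  classical
  obtain ⟨hα0, hα1⟩ := hα
  set s0 : ℝ := (τ / x) ^ (1/α₀) with hs0def
  have hs0 : 0 < s0 := Real.rpow_pos_of_pos (div_pos hτ hx) _
  set Y : Ω → ℝ := fun ω => ∑ k, w k ^ (1/α) * Z k ω with hYdef
  have hYmeas : Measurable Y :=
    Finset.measurable_sum _ fun k _ => (hmeasZ k).const_mul _
  have hYpos : ∀ ω, 0 < Y ω := by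
    intro ω
    obtain ⟨k0, hk0⟩ := hw'
    refine Finset.sum_pos'
      (fun k _ => mul_nonneg (Real.rpow_nonneg (hw k) _) (hZpos k ω).le)
      ⟨k0, Finset.mem_univ _, ?_⟩
    exact mul_pos (Real.rpow_pos_of_pos hk0 _) (hZpos k0 ω)
  have hmeas_all : ∀ i, Measurable (Sum.elim (fun _ : Unit => ε) Z i) := by
    rintro (u | k)
    · exact hmeasε
    · exact hmeasZ k
  -- independence of the Z's among themselves
  have hZindep : iIndepFun Z P := by
    rw [iIndepFun_iff_measure_inter_preimage_eq_mul]
    intro S sets hsets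
    have h := hindep.measure_inter_preimage_eq_mul (S.image Sum.inr)
      (sets := fun i => Sum.rec (fun _ => (Set.univ : Set ℝ)) sets i) ?_
    · rw [Finset.set_biInter_finset_image, Finset.prod_image
        (fun a _ b _ h => Sum.inr_injective h)] at h
      exact h
    · intro i hi
      rcases Finset.mem_image.mp hi with ⟨k, hk, rfl⟩
      exact hsets k hk
  -- independence of Y and ε
  have hindYε : IndepFun Y ε P := by
    set T : Finset (Unit ⊕ Fin K) := Finset.univ.image Sum.inr with hT
    set Sl : Finset (Unit ⊕ Fin K) := {Sum.inl ()} with hSl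
    have hdisj : Disjoint T Sl := by
      simp [Finset.disjoint_left, hT, hSl]
    have base := hindep.indepFun_finset T Sl hdisj hmeas_all
    have hmemT : ∀ k : Fin K, (Sum.inr k : Unit ⊕ Fin K) ∈ T := by
      intro k; simp [hT]
    have hmemS : (Sum.inl () : Unit ⊕ Fin K) ∈ Sl := by simp [hSl]
    set φ : (T → ℝ) → ℝ := fun v => ∑ k : Fin K, w k ^ (1/α) * v ⟨Sum.inr k, hmemT k⟩ with hφdef
    set ψ : (Sl → ℝ) → ℝ := fun v => v ⟨Sum.inl (), hmemS⟩ with hψdef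
    have hφ : Measurable φ :=
      Finset.measurable_sum _ fun k _ => (measurable_pi_apply _).const_mul _
    have hψ : Measurable ψ := measurable_pi_apply _
    have h := base.comp hφ hψ
    have h1 : (φ ∘ fun a (i : T) => Sum.elim (fun _ : Unit => ε) Z i a) = Y := by
      funext a; simp [hφdef, Function.comp, hYdef]
    have h2 : (ψ ∘ fun a (i : Sl) => Sum.elim (fun _ : Unit => ε) Z i a) = ε := by
      funext a; simp [hψdef, Function.comp]
    rwa [h1, h2] at h
  -- Step B : express the probability as a Laplace transform of Y
  have hmap : P.map (fun ω => (Y ω, ε ω)) = (P.map Y).prod (P.map ε) :=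
    (indepFun_iff_map_prod_eq_prod_map_map hYmeas.aemeasurable hmeasε.aemeasurable).mp hindYε
  have hAmeas : MeasurableSet {p : ℝ × ℝ | p.2 * p.1 ^ α₀ ≤ x} :=
    measurableSet_le (by fun_prop) measurable_const
  have hev : {ω | ε ω * (∑ k, w k ^ (1/α) * Z k ω) ^ α₀ ≤ x}
      = (fun ω => (Y ω, ε ω)) ⁻¹' {p : ℝ × ℝ | p.2 * p.1 ^ α₀ ≤ x} := rfl
  have haeY : ∀ᵐ y ∂(P.map Y), 0 < y := by
    rw [ae_iff]
    have : {y : ℝ | ¬ 0 < y} = Set.Iic 0 := by ext y; simp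
    rw [this, Measure.map_apply hYmeas measurableSet_Iic]
    have : Y ⁻¹' Set.Iic 0 = ∅ := by
      ext ω; simp [not_le.mpr (hYpos ω)]
    simp [this]
  have hstep : ∀ y : ℝ, 0 < y →
      (P.map ε) (Prod.mk y ⁻¹' {p : ℝ × ℝ | p.2 * p.1 ^ α₀ ≤ x})
        = ENNReal.ofReal (Real.exp (-(s0 * y))) := by
    intro y hy
    have hyα : 0 < y ^ α₀ := Real.rpow_pos_of_pos hy _
    have hset : Prod.mk y ⁻¹' {p : ℝ × ℝ | p.2 * p.1 ^ α₀ ≤ x} = Set.Iic (x / y ^ α₀) := by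
      ext e
      simp only [Set.mem_preimage, Set.mem_setOf_eq, Set.mem_Iic]
      exact le_div_iff₀ hyα |>.symm
    rw [hset, Measure.map_apply hmeasε measurableSet_Iic]
    have hpre : ε ⁻¹' Set.Iic (x / y ^ α₀) = {ω | ε ω ≤ x / y ^ α₀} := rfl
    rw [hpre]
    have hxy : 0 < x / y ^ α₀ := div_pos hx hyα
    have hcdf := hεcdf _ hxy
    have harg : (τ / (x / y ^ α₀)) ^ (1/α₀) = s0 * y := by
      have h1 : τ / (x / y ^ α₀) = (τ / x) * y ^ α₀ := by
        field_simp
      rw [h1, Real.mul_rpow (div_pos hτ hx).le hyα.le, hs0def,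
        ← Real.rpow_mul hy.le, mul_one_div_cancel hα₀.ne', Real.rpow_one]
    rw [← ENNReal.ofReal_toReal (measure_ne_top P _), hcdf, harg]
  have hprob : P {ω | ε ω * (∑ k, w k ^ (1/α) * Z k ω) ^ α₀ ≤ x}
      = ∫⁻ y, ENNReal.ofReal (Real.exp (-(s0 * y))) ∂(P.map Y) := by
    rw [hev, ← Measure.map_apply (hYmeas.prodMk hmeasε) hAmeas, hmap,
      Measure.prod_apply hAmeas]
    exact lintegral_congr_ae (haeY.mono fun y hy => hstep y hy)
  have hfcont : Continuous fun y : ℝ => Real.exp (-(s0 * y)) := by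
    continuity
  have hfint : Integrable (fun y : ℝ => Real.exp (-(s0 * y))) (P.map Y) := by
    refine ⟨hfcont.aestronglyMeasurable, ?_⟩
    refine HasFiniteIntegral.of_bounded (C := 1) ?_
    refine haeY.mono fun y hy => ?_
    rw [Real.norm_eq_abs, abs_of_pos (Real.exp_pos _)]
    exact Real.exp_le_one_iff.mpr (by nlinarith [hs0])
  have htoReal : (P {ω | ε ω * (∑ k, w k ^ (1/α) * Z k ω) ^ α₀ ≤ x}).toReal
      = ∫ ω, Real.exp (-(s0 * Y ω)) ∂P := by
    rw [hprob, ← ofReal_integral_eq_lintegral_ofReal hfint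
      (Filter.Eventually.of_forall fun y => (Real.exp_pos _).le),
      ENNReal.toReal_ofReal (integral_nonneg fun y => (Real.exp_pos _).le),
      integral_map hYmeas.aemeasurable hfcont.aestronglyMeasurable]
  rw [htoReal]
  -- Step C : factor the Laplace transform of the sum
  set c : Fin K → ℝ := fun k => s0 * w k ^ (1/α) with hcdef
  have hc : ∀ k, 0 ≤ c k := fun k => mul_nonneg hs0.le (Real.rpow_nonneg (hw k) _)
  set X : Fin K → Ω → ℝ := fun k ω => c k * Z k ω with hXdef
  have hXmeas : ∀ k, Measurable (X k) := fun k => (hmeasZ k).const_mul _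
  have hXindep : iIndepFun X P :=
    hZindep.comp (fun k z => c k * z) (fun k => measurable_id.const_mul _)
  have hsum : ∀ ω, -(s0 * Y ω) = (-1 : ℝ) * (∑ k, X k) ω := by
    intro ω
    have h : (∑ k, X k) ω = s0 * Y ω := by
      simp only [hXdef, Finset.sum_apply, hYdef, Finset.mul_sum]
      exact Finset.sum_congr rfl fun k _ => mul_assoc _ _ _
    rw [h, neg_one_mul]
  have hmgf := hXindep.mgf_sum hXmeas Finset.univ (t := -1)
  have hL : ∫ ω, Real.exp (-(s0 * Y ω)) ∂P = ∏ k, mgf (X k) P (-1) := by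
    rw [← hmgf, mgf]
    congr 1
    funext ω
    rw [hsum ω]
  have hmgfk : ∀ k, mgf (X k) P (-1) = Real.exp (θ k ^ α - (θ k + c k) ^ α) := by
    intro k
    have := hZlap k (c k) (hc k)
    rw [mgf, ← this]
    exact integral_congr_ae (Filter.Eventually.of_forall fun ω => by
      simp [hXdef, neg_one_mul])
  rw [hL]
  have : ∏ k, mgf (X k) P (-1) = Real.exp (∑ k, (θ k ^ α - (θ k + c k) ^ α)) := by
    rw [Real.exp_sum]
    exact Finset.prod_congr rfl fun k _ => hmgfk k
  rw [this, Finset.sum_sub_distrib]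
  congr 1
  congr 1
  rw [Finset.sum_filter_of_ne]
  intro k _ hk
  rcases (hθ k).lt_or_eq with h | h
  · exact h
  · exact absurd (by rw [← h, Real.zero_rpow hα0.ne']) hk
end

section
/- Let F(x) = exp[Σ_{k∈D̄} θ_k^α - Σ_{k=1}^K {θ_k + (τ/x)^{1/α₀} ω_k^{1/α}}^α] with α ∈ (0,1), α₀, τ > 0, weights ω_k ≥ 0, θ_k ≥ 0, D̄ = {k: θ_k>0}. If at least one k with ω_k > 0 has θ_k = 0, then the survival function satisfies 1 - F(x) ~ c'·x^{-α/α₀} as x → ∞, where c' = τ^{α/α₀} Σ_{k: θ_k=0} ω_k > 0. -/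
open Real Filter

private lemma term_tendsto (α : ℝ) (hα : α ∈ Set.Ioo (0:ℝ) 1) (θ c : ℝ) (hθ : 0 < θ) :
    Tendsto (fun s : ℝ => ((θ + s * c) ^ α - θ ^ α) / s ^ α) (nhdsWithin 0 (Set.Ioi 0))
      (nhds 0) := by
  have hinner : HasDerivAt (fun s : ℝ => θ + s * c) c 0 := by
    simpa using ((hasDerivAt_id (0:ℝ)).mul_const c).const_add θ
  have hcomp : HasDerivAt (fun s : ℝ => (θ + s * c) ^ α) (c * α * θ ^ (α - 1)) 0 := by
    have := hinner.rpow_const (p := α) (by left; simp [hθ.ne'])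
    simpa using this
  rw [hasDerivAt_iff_tendsto_slope] at hcomp
  have h1 : Tendsto (fun s : ℝ => ((θ + s * c) ^ α - θ ^ α) / s)
      (nhdsWithin 0 (Set.Ioi 0)) (nhds (c * α * θ ^ (α - 1))) := by
    have := hcomp.mono_left (nhdsWithin_mono 0 (by intro x hx; exact (ne_of_gt hx)))
    apply this.congr
    intro s
    simp [slope_def_field]
  have h2 : Tendsto (fun s : ℝ => s ^ (1 - α)) (nhdsWithin 0 (Set.Ioi 0)) (nhds 0) := by
    have hc : ContinuousAt (fun s : ℝ => s ^ (1 - α)) 0 :=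
      continuousAt_rpow_const 0 (1 - α) (Or.inr (by linarith [hα.2]))
    have := hc.tendsto.mono_left (nhdsWithin_le_nhds (s := Set.Ioi (0:ℝ)))
    simpa [Real.zero_rpow (by linarith [hα.2] : (1:ℝ) - α ≠ 0)] using this
  have := h1.mul h2
  rw [mul_zero] at this
  apply this.congr'
  filter_upwards [self_mem_nhdsWithin] with s hs
  have hs0 : (0:ℝ) < s := hs
  have hsα : s ^ α ≠ 0 := (Real.rpow_pos_of_pos hs0 α).ne'
  rw [eq_div_iff hsα, mul_assoc, ← Real.rpow_add hs0, sub_add_cancel, Real.rpow_one,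
    div_mul_cancel₀ _ hs0.ne']

/-- If the location is covered by an un-tilted knot, the survival function satisfies
`1 - F(x) ~ c' x^{-α/α₀}` as `x → ∞`, where `c' = τ^{α/α₀} ∑_{k : θ_k = 0} ω_k`. -/
theorem stmt4 (K : ℕ) (α α₀ τ : ℝ) (hα : α ∈ Set.Ioo (0:ℝ) 1) (hα₀ : 0 < α₀) (hτ : 0 < τ)
    (w θ : Fin K → ℝ) (hw : ∀ k, 0 ≤ w k) (hθ : ∀ k, 0 ≤ θ k)
    (hk : ∃ k, 0 < w k ∧ θ k = 0)
    (F : ℝ → ℝ)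
    (hF : ∀ x : ℝ, 0 < x → F x =
      Real.exp ((∑ k ∈ Finset.univ.filter (fun k => 0 < θ k), θ k ^ α) -
        ∑ k, (θ k + (τ / x) ^ (1/α₀) * w k ^ (1/α)) ^ α)) :
    Tendsto (fun x : ℝ => (1 - F x) /
        ((τ ^ (α/α₀) * ∑ k ∈ Finset.univ.filter (fun k => θ k = 0), w k) * x ^ (-(α/α₀))))
      atTop (nhds 1) := by
  obtain ⟨hα0, hα1⟩ := hα
  set C : ℝ := ∑ k ∈ Finset.univ.filter (fun k => θ k = 0), w k with hCdef
  have hC : 0 < C := by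
    obtain ⟨k, hwk, hθk⟩ := hk
    refine Finset.sum_pos' (fun i _ => hw i) ⟨k, ?_, hwk⟩
    simp [hθk]
  -- the exponent function
  set u : ℝ → ℝ := fun s => (∑ k, (θ k + s * w k ^ (1/α)) ^ α) -
      ∑ k ∈ Finset.univ.filter (fun k => 0 < θ k), θ k ^ α with hudef
  have hfiltereq : (Finset.univ.filter fun k : Fin K => ¬ θ k = 0) =
      Finset.univ.filter fun k => 0 < θ k := by
    apply Finset.filter_congr
    intro k _
    simp [lt_iff_le_and_ne, hθ k, eq_comm]
  have hsplit : ∀ s : ℝ, 0 < s → u s = C * s ^ α +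
      ∑ k ∈ Finset.univ.filter (fun k => 0 < θ k),
        ((θ k + s * w k ^ (1/α)) ^ α - θ k ^ α) := by
    intro s hs
    have h1 : (∑ k, (θ k + s * w k ^ (1/α)) ^ α) =
        (∑ k ∈ Finset.univ.filter (fun k => θ k = 0), (θ k + s * w k ^ (1/α)) ^ α) +
        ∑ k ∈ Finset.univ.filter (fun k => 0 < θ k), (θ k + s * w k ^ (1/α)) ^ α := by
      rw [← hfiltereq, Finset.sum_filter_add_sum_filter_not]
    have h2 : (∑ k ∈ Finset.univ.filter (fun k => θ k = 0), (θ k + s * w k ^ (1/α)) ^ α)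
        = C * s ^ α := by
      rw [Finset.sum_mul]
      apply Finset.sum_congr rfl
      intro k hkmem
      have hθk : θ k = 0 := by simpa using hkmem
      rw [hθk, zero_add, Real.mul_rpow hs.le (Real.rpow_nonneg (hw k) _),
        ← Real.rpow_mul (hw k), one_div, inv_mul_cancel₀ hα0.ne', Real.rpow_one, mul_comm]
    rw [hudef]
    simp only
    rw [h1, h2, Finset.sum_sub_distrib]
    ring
  have hsαpos : ∀ s : ℝ, 0 < s → 0 < s ^ α := fun s hs => Real.rpow_pos_of_pos hs α
  have hRnonneg : ∀ s : ℝ, 0 < s → ∀ k : Fin K,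
      0 ≤ (θ k + s * w k ^ (1/α)) ^ α - θ k ^ α := by
    intro s hs k
    have hle : θ k ≤ θ k + s * w k ^ (1/α) :=
      le_add_of_nonneg_right (mul_nonneg hs.le (Real.rpow_nonneg (hw k) _))
    exact sub_nonneg.mpr (Real.rpow_le_rpow (hθ k) hle hα0.le)
  have hupos : ∀ s : ℝ, 0 < s → 0 < u s := by
    intro s hs
    rw [hsplit s hs]
    have hsum : 0 ≤ ∑ k ∈ Finset.univ.filter (fun k => 0 < θ k),
        ((θ k + s * w k ^ (1/α)) ^ α - θ k ^ α) :=
      Finset.sum_nonneg fun k _ => hRnonneg s hs k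
    exact add_pos_of_pos_of_nonneg (mul_pos hC (hsαpos s hs)) hsum
  have hA : Tendsto (fun s => u s / s ^ α) (nhdsWithin 0 (Set.Ioi 0)) (nhds C) := by
    have hsum : Tendsto (fun s : ℝ => ∑ k ∈ Finset.univ.filter (fun k => 0 < θ k),
        ((θ k + s * w k ^ (1/α)) ^ α - θ k ^ α) / s ^ α)
        (nhdsWithin 0 (Set.Ioi 0)) (nhds 0) := by
      have := tendsto_finset_sum (Finset.univ.filter fun k : Fin K => 0 < θ k)
        (fun k hkm => term_tendsto α ⟨hα0, hα1⟩ (θ k) (w k ^ (1/α)) (by simpa using hkm))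
      simpa using this
    have hlim := (tendsto_const_nhds (x := C)
      (f := nhdsWithin (0:ℝ) (Set.Ioi 0))).add hsum
    rw [add_zero] at hlim
    apply hlim.congr'
    filter_upwards [self_mem_nhdsWithin] with s hs
    have hs0 : (0:ℝ) < s := hs
    rw [hsplit s hs0, add_div, mul_div_cancel_right₀ _ (hsαpos s hs0).ne', Finset.sum_div]
  have hsα0 : Tendsto (fun s : ℝ => s ^ α) (nhdsWithin 0 (Set.Ioi 0)) (nhds 0) := by
    have hcont : ContinuousAt (fun s : ℝ => s ^ α) 0 :=
      continuousAt_rpow_const 0 α (Or.inr hα0.le)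
    have := hcont.tendsto.mono_left (nhdsWithin_le_nhds (s := Set.Ioi (0:ℝ)))
    simpa [Real.zero_rpow hα0.ne'] using this
  have hu0 : Tendsto u (nhdsWithin 0 (Set.Ioi 0)) (nhds 0) := by
    have := hA.mul hsα0
    rw [mul_zero] at this
    apply this.congr'
    filter_upwards [self_mem_nhdsWithin] with s hs
    exact div_mul_cancel₀ _ (hsαpos s hs).ne'
  have hnegu : Tendsto (fun s => -u s) (nhdsWithin 0 (Set.Ioi 0))
      (nhdsWithin 0 {0}ᶜ) := by
    rw [tendsto_nhdsWithin_iff]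
    refine ⟨by simpa using hu0.neg, ?_⟩
    filter_upwards [self_mem_nhdsWithin] with s hs
    simp only [Set.mem_compl_iff, Set.mem_singleton_iff]
    exact neg_ne_zero.mpr (hupos s hs).ne'
  have hexp := Real.hasDerivAt_exp 0
  rw [hasDerivAt_iff_tendsto_slope] at hexp
  have hE : Tendsto (fun s => (Real.exp (-u s) - 1) / (-u s))
      (nhdsWithin 0 (Set.Ioi 0)) (nhds 1) := by
    have := hexp.comp hnegu
    simpa [Function.comp_def, slope_def_field, Real.exp_zero] using this
  have hg : Tendsto (fun s => (1 - Real.exp (-u s)) / (C * s ^ α))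
      (nhdsWithin 0 (Set.Ioi 0)) (nhds 1) := by
    have hdiv := hA.div_const C
    rw [div_self hC.ne'] at hdiv
    have hml := hE.mul hdiv
    rw [mul_one] at hml
    apply hml.congr'
    filter_upwards [self_mem_nhdsWithin] with s hs
    have hs0 : (0:ℝ) < s := hs
    have hune : u s ≠ 0 := (hupos s hs0).ne'
    have hsne : s ^ α ≠ 0 := (hsαpos s hs0).ne'
    field_simp
    ring
  have hτx : Tendsto (fun x : ℝ => τ / x) atTop (nhdsWithin 0 (Set.Ioi 0)) := by
    rw [tendsto_nhdsWithin_iff]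
    constructor
    · simpa [div_eq_mul_inv] using tendsto_inv_atTop_zero.const_mul τ
    · filter_upwards [eventually_gt_atTop 0] with x hx
      exact div_pos hτ hx
  have hscomp : Tendsto (fun x : ℝ => (τ / x) ^ (1/α₀)) atTop
      (nhdsWithin 0 (Set.Ioi 0)) := by
    rw [tendsto_nhdsWithin_iff]
    constructor
    · have hcont : ContinuousAt (fun t : ℝ => t ^ (1/α₀)) 0 :=
        continuousAt_rpow_const 0 (1/α₀) (Or.inr (by positivity))
      have := hcont.tendsto.comp (hτx.mono_right nhdsWithin_le_nhds)
      simpa [Function.comp_def, Real.zero_rpow (inv_pos.mpr hα₀).ne'] using this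
    · filter_upwards [eventually_gt_atTop 0] with x hx
      exact Real.rpow_pos_of_pos (div_pos hτ hx) _
  have hfinal := hg.comp hscomp
  apply hfinal.congr'
  filter_upwards [eventually_gt_atTop 0] with x hx
  have hFx := hF x hx
  have hexparg : -(u ((τ/x) ^ (1/α₀))) =
      (∑ k ∈ Finset.univ.filter (fun k => 0 < θ k), θ k ^ α) -
        ∑ k, (θ k + (τ/x) ^ (1/α₀) * w k ^ (1/α)) ^ α := by
    simp [hudef]
  have hden : C * ((τ/x) ^ (1/α₀)) ^ α = (τ ^ (α/α₀) * C) * x ^ (-(α/α₀)) := by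
    rw [← Real.rpow_mul (le_of_lt (div_pos hτ hx))]
    have h1α : (1/α₀) * α = α/α₀ := by ring
    rw [h1α, Real.div_rpow hτ.le hx.le, Real.rpow_neg hx.le, div_eq_mul_inv]
    ring
  simp only [Function.comp]
  rw [hFx, ← hexparg, hden]
end

section
/- Let F(x) = exp[Σ_{k=1}^K θ_k^α - Σ_{k=1}^K {θ_k + (τ/x)^{1/α₀} ω_k^{1/α}}^α] with α ∈ (0,1), α₀, τ > 0, all θ_k > 0, and weights ω_k ≥ 0 not all zero. Then 1 - F(x) ~ c·x^{-1/α₀} as x → ∞, where c = α τ^{1/α₀} Σ_{k=1}^K θ_k^{α-1} ω_k^{1/α} > 0. -/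
open Real Filter

/-- If all tilting parameters are positive, the survival function satisfies
`1 - F(x) ~ c x^{-1/α₀}` as `x → ∞`, with `c = α τ^{1/α₀} ∑_k θ_k^{α-1} ω_k^{1/α}`. -/
theorem stmt5 (K : ℕ) (α α₀ τ : ℝ) (hα : α ∈ Set.Ioo (0:ℝ) 1) (hα₀ : 0 < α₀) (hτ : 0 < τ)
    (w θ : Fin K → ℝ) (hw : ∀ k, 0 ≤ w k) (hw' : ∃ k, 0 < w k) (hθ : ∀ k, 0 < θ k)
    (F : ℝ → ℝ)
    (hF : ∀ x : ℝ, 0 < x → F x =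
      Real.exp ((∑ k, θ k ^ α) -
        ∑ k, (θ k + (τ / x) ^ (1/α₀) * w k ^ (1/α)) ^ α)) :
    Tendsto (fun x : ℝ => (1 - F x) /
        ((α * τ ^ (1/α₀) * ∑ k, θ k ^ (α - 1) * w k ^ (1/α)) * x ^ (-(1/α₀))))
      atTop (nhds 1) := by
  obtain ⟨hα0, hα1⟩ := hα
  set p := 1/α₀ with hpdef
  have hp0 : 0 < p := by positivity
  set c : Fin K → ℝ := fun k => w k ^ (1/α) with hcdef
  have hc0 : ∀ k, 0 ≤ c k := fun k => rpow_nonneg (hw k) _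
  obtain ⟨k₀, hk₀⟩ := hw'
  have hck₀ : 0 < c k₀ := rpow_pos_of_pos hk₀ _
  set h : ℝ → ℝ := fun t => ∑ k, (θ k + t * c k) ^ α with hhdef
  set s : ℝ := α * ∑ k, θ k ^ (α - 1) * c k with hsdef
  have hs0 : 0 < s := by
    apply mul_pos hα0
    apply Finset.sum_pos' (fun k _ => mul_nonneg (rpow_nonneg (hθ k).le _) (hc0 k))
    exact ⟨k₀, Finset.mem_univ _, mul_pos (rpow_pos_of_pos (hθ k₀) _) hck₀⟩
  -- derivative of h at 0
  have hderiv : HasDerivAt h s 0 := by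
    have : HasDerivAt h (∑ k, c k * α * θ k ^ (α - 1)) 0 := by
      apply HasDerivAt.fun_sum
      intro k _
      have hf : HasDerivAt (fun t : ℝ => θ k + t * c k) (c k) 0 := by
        simpa using ((hasDerivAt_id (0:ℝ)).mul_const (c k)).const_add (θ k)
      have := hf.rpow_const (p := α) (Or.inl (by simp [(hθ k).ne']))
      simpa [mul_assoc] using this
    convert this using 1
    rw [hsdef, Finset.mul_sum]
    exact Finset.sum_congr rfl fun k _ => by ring
  have hh0 : h 0 = ∑ k, θ k ^ α := by simp [hhdef]
  -- slope tendsto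
  have hslope : Tendsto (fun t => (h t - h 0) / t) (nhdsWithin 0 (Set.Ioi 0)) (nhds s) := by
    have h1 := hasDerivAt_iff_tendsto_slope.mp hderiv
    have h2 := h1.mono_left
      (nhdsWithin_mono 0 (fun t ht => (Set.mem_Ioi.mp ht).ne' : Set.Ioi (0:ℝ) ⊆ {(0:ℝ)}ᶜ))
    refine h2.congr fun t => ?_
    simp [slope_def_field, div_eq_div_iff]
  -- positivity of the increment
  have hupos : ∀ t : ℝ, 0 < t → 0 < h t - h 0 := by
    intro t ht
    rw [sub_pos, hh0, hhdef]
    apply Finset.sum_lt_sum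
    · intro k _
      exact Real.rpow_le_rpow (hθ k).le (le_add_of_nonneg_right (mul_nonneg ht.le (hc0 k))) hα0.le
    · exact ⟨k₀, Finset.mem_univ _,
        Real.rpow_lt_rpow (hθ k₀).le (lt_add_of_pos_right _ (mul_pos ht hck₀)) hα0⟩
  -- the key limit in the variable t
  set u : ℝ → ℝ := fun t => h t - h 0 with hudef
  have hu0 : Tendsto u (nhdsWithin 0 (Set.Ioi 0)) (nhds 0) := by
    have hid : Tendsto (fun t : ℝ => t) (nhdsWithin 0 (Set.Ioi 0)) (nhds 0) :=
      (continuous_id.tendsto 0).mono_left nhdsWithin_le_nhds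
    have := hslope.mul hid
    rw [mul_zero] at this
    refine this.congr' ?_
    filter_upwards [self_mem_nhdsWithin] with t ht
    field_simp [(Set.mem_Ioi.mp ht).ne']
    rfl
  have hu0' : Tendsto u (nhdsWithin 0 (Set.Ioi 0)) (nhdsWithin 0 {(0:ℝ)}ᶜ) := by
    rw [tendsto_nhdsWithin_iff]
    refine ⟨hu0, ?_⟩
    filter_upwards [self_mem_nhdsWithin] with t ht
    exact (hupos t (Set.mem_Ioi.mp ht)).ne'
  have hexp : Tendsto (fun y : ℝ => (1 - Real.exp (-y)) / y) (nhdsWithin 0 {(0:ℝ)}ᶜ) (nhds 1) := by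
    have hd : HasDerivAt (fun y : ℝ => 1 - Real.exp (-y)) 1 0 := by
      have : HasDerivAt (fun y : ℝ => Real.exp (-y)) (-1) 0 := by
        simpa [Function.comp_def] using (Real.hasDerivAt_exp (-0)).comp 0 (hasDerivAt_neg 0)
      simpa using this.const_sub 1
    have := hasDerivAt_iff_tendsto_slope.mp hd
    refine this.congr fun y => ?_
    simp [slope_def_field]
  have h1 : Tendsto (fun t => (1 - Real.exp (-(u t))) / u t) (nhdsWithin 0 (Set.Ioi 0)) (nhds 1) :=
    hexp.comp hu0'
  have h2 : Tendsto (fun t => ((1 - Real.exp (-(u t))) / u t) * ((h t - h 0) / t) / s)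
      (nhdsWithin 0 (Set.Ioi 0)) (nhds (1 * s / s)) := (h1.mul hslope).div_const s
  rw [one_mul, div_self hs0.ne'] at h2
  have hφ : Tendsto (fun t => (1 - Real.exp (h 0 - h t)) / (s * t))
      (nhdsWithin 0 (Set.Ioi 0)) (nhds 1) := by
    refine h2.congr' ?_
    filter_upwards [self_mem_nhdsWithin] with t ht
    have ht0 : (0:ℝ) < t := Set.mem_Ioi.mp ht
    have hut : u t ≠ 0 := (hupos t ht0).ne'
    have heq : h 0 - h t = -(u t) := by simp [hudef]
    rw [heq]
    field_simp
    have hu' : u t = h t - h 0 := rfl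
    rw [hu']
    ring
  -- the substitution t = (τ/x)^p
  set T : ℝ → ℝ := fun x => (τ / x) ^ p with hTdef
  have hT : Tendsto T atTop (nhdsWithin 0 (Set.Ioi 0)) := by
    rw [tendsto_nhdsWithin_iff]
    constructor
    · have : Tendsto (fun x : ℝ => τ ^ p * x ^ (-p)) atTop (nhds (τ ^ p * 0)) :=
        (tendsto_rpow_neg_atTop hp0).const_mul _
      rw [mul_zero] at this
      refine this.congr' ?_
      filter_upwards [eventually_gt_atTop (0:ℝ)] with x hx
      simp only [hTdef]
      rw [Real.div_rpow hτ.le hx.le, Real.rpow_neg hx.le, div_eq_mul_inv]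
    · filter_upwards [eventually_gt_atTop (0:ℝ)] with x hx
      exact Real.rpow_pos_of_pos (div_pos hτ hx) _
  have hcomp := hφ.comp hT
  refine hcomp.congr' ?_
  filter_upwards [eventually_gt_atTop (0:ℝ)] with x hx
  have hFx : F x = Real.exp (h 0 - h (T x)) := by
    rw [hF x hx, hh0]
  have hden : (α * τ ^ p * ∑ k, θ k ^ (α - 1) * c k) * x ^ (-p) = s * T x := by
    simp only [hTdef]
    rw [Real.div_rpow hτ.le hx.le, Real.rpow_neg hx.le, hsdef]
    field_simp
  simp only [Function.comp]
  rw [← hFx, ← hden]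
end

section
/- Let F̄(x) = 1 - F(x) be a survival function satisfying F̄(x) = c·x^{-1/α₀}(1 + (d/c² - 1/2)·c·x^{-1/α₀} + o(x^{-1/α₀})) as x → ∞ with c > 0. Then the quantile function q(t) = F^{-1}(1 - 1/t) satisfies q(t) = c^{α₀} t^{α₀} (1 + α₀(d/c² - 1/2)t^{-1} + o(t^{-1})) as t → ∞. -/
open Real Filter Asymptotics Topology

private lemma aux_slope (u α : ℝ) (hα : 0 < α) :
    Tendsto (fun t : ℝ => t * ((1 + u / t) ^ (-(1/α)) - 1)) atTop (𝓝 (-(u/α))) := by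
  have h1 : HasDerivAt (fun s : ℝ => 1 + u * s) u 0 := by
    simpa using ((hasDerivAt_id (0:ℝ)).const_mul u).const_add 1
  have hd : HasDerivAt (fun s : ℝ => (1 + u * s) ^ (-(1/α))) (-(u/α)) 0 := by
    have h2 := h1.rpow_const (p := -(1/α)) (Or.inl (by norm_num))
    have h3 : u * -(1/α) * (1 + u * 0) ^ (-(1/α) - 1) = -(u/α) := by
      rw [mul_zero, add_zero, Real.one_rpow]
      ring
    rwa [h3] at h2
  rw [hasDerivAt_iff_tendsto_slope] at hd
  have htends : Tendsto (fun t : ℝ => t⁻¹) atTop (𝓝[≠] (0:ℝ)) := by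
    apply tendsto_nhdsWithin_of_tendsto_nhds_of_eventually_within _ tendsto_inv_atTop_zero
    filter_upwards [eventually_ge_atTop 1] with t ht
    simpa using inv_ne_zero (by intro h; rw [h] at ht; norm_num at ht : t ≠ 0)
  refine (hd.comp htends).congr' ?_
  filter_upwards [eventually_ge_atTop 1] with t ht
  have ht0 : t ≠ 0 := by intro h; rw [h] at ht; norm_num at ht
  show slope (fun s : ℝ => (1 + u * s) ^ (-(1/α))) 0 t⁻¹ = t * ((1 + u / t) ^ (-(1/α)) - 1)
  rw [slope_def_field, mul_zero, add_zero, Real.one_rpow, sub_zero,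
      div_eq_mul_inv, inv_inv, ← div_eq_mul_inv u t, mul_comm]

private lemma key (α c k : ℝ) (hα : 0 < α) (hc : 0 < c) (F : ℝ → ℝ)
    (htail : (fun x : ℝ => (1 - F x) - c * x ^ (-(1/α)) * (1 + k * c * x ^ (-(1/α))))
      =o[atTop] fun x : ℝ => x ^ (-(2/α))) (u : ℝ) :
    Tendsto (fun t : ℝ => t^2 * ((1 - F (c ^ α * t ^ α * (1 + u / t))) - 1/t)) atTop
      (𝓝 (k - u/α)) := by
  set x : ℝ → ℝ := fun t => c ^ α * t ^ α * (1 + u / t) with hxdef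
  set w : ℝ → ℝ := fun t => (1 + u / t) ^ (-(1/α)) with hwdef
  have hu : Tendsto (fun t : ℝ => u / t) atTop (𝓝 0) := by
    simpa [div_eq_mul_inv] using tendsto_inv_atTop_zero.const_mul u
  have hone : Tendsto (fun t : ℝ => 1 + u / t) atTop (𝓝 1) := by
    simpa using hu.const_add 1
  have h1pos : ∀ᶠ t : ℝ in atTop, 0 < 1 + u / t :=
    hone.eventually_const_lt (by norm_num)
  have hw1 : Tendsto w atTop (𝓝 1) := by
    have := hone.rpow_const (p := -(1/α)) (Or.inl one_ne_zero)
    simpa [hwdef] using this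
  have hxt : Tendsto x atTop atTop := by
    have h1 : Tendsto (fun t : ℝ => c ^ α * t ^ α) atTop atTop :=
      (tendsto_rpow_atTop hα).const_mul_atTop (Real.rpow_pos_of_pos hc α)
    exact Filter.Tendsto.atTop_mul_pos (by norm_num) h1 hone
  have e1 : ∀ y : ℝ, 0 < y → (y ^ α) ^ (-(1/α)) = y⁻¹ := by
    intro y hy
    rw [← Real.rpow_mul hy.le, show α * -(1/α) = -1 by field_simp, Real.rpow_neg_one]
  have hA : ∀ t : ℝ, 0 < t → 0 < 1 + u / t → (x t) ^ (-(1/α)) = c⁻¹ * t⁻¹ * w t := by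
    intro t ht h1
    rw [hxdef]
    simp only
    rw [Real.mul_rpow (by positivity) h1.le,
        Real.mul_rpow (by positivity) (by positivity), e1 c hc, e1 t ht]
  have hA2 : ∀ t : ℝ, 0 < t → 0 < 1 + u / t → (x t) ^ (-(2/α)) = (c⁻¹ * t⁻¹ * w t)^2 := by
    intro t ht h1
    have hx0 : 0 < x t := by
      have := Real.rpow_pos_of_pos hc α
      have := Real.rpow_pos_of_pos ht α
      positivity
    have : (x t) ^ (-(2/α)) = ((x t) ^ (-(1/α)))^2 := by
      rw [← Real.rpow_natCast ((x t) ^ (-(1/α))) 2, ← Real.rpow_mul hx0.le]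
      congr 1
      push_cast
      ring
    rw [this, hA t ht h1]
  have hcomp := htail.comp_tendsto hxt
  have hO : (fun t : ℝ => (x t) ^ (-(2/α))) =O[atTop] (fun t : ℝ => t⁻¹ * t⁻¹) := by
    rw [isBigO_iff]
    refine ⟨4 * (c⁻¹)^2, ?_⟩
    filter_upwards [eventually_gt_atTop 1, h1pos,
        hw1.eventually_lt_const (by norm_num : (1:ℝ) < 2)] with t ht h1 hw2
    have ht0 : (0:ℝ) < t := lt_trans one_pos ht
    rw [hA2 t ht0 h1, Real.norm_eq_abs, Real.norm_eq_abs]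
    have hwnn : 0 ≤ w t := Real.rpow_nonneg h1.le _
    rw [abs_of_nonneg (by positivity : (0:ℝ) ≤ (c⁻¹ * t⁻¹ * w t)^2),
        abs_of_nonneg (by positivity : (0:ℝ) ≤ t⁻¹ * t⁻¹)]
    have hw4 : (w t)^2 ≤ 4 := by nlinarith
    calc (c⁻¹ * t⁻¹ * w t)^2 = (c⁻¹)^2 * (t⁻¹ * t⁻¹) * (w t)^2 := by ring
      _ ≤ (c⁻¹)^2 * (t⁻¹ * t⁻¹) * 4 := by
          apply mul_le_mul_of_nonneg_left hw4 (by positivity)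
      _ = 4 * (c⁻¹)^2 * (t⁻¹ * t⁻¹) := by ring
  have hE := (hcomp.trans_isBigO hO).tendsto_div_nhds_zero
  have term1 : Tendsto (fun t : ℝ => t^2 *
      ((1 - F (x t)) - c * (x t) ^ (-(1/α)) * (1 + k * c * (x t) ^ (-(1/α)))))
      atTop (𝓝 0) := by
    refine Tendsto.congr' ?_ hE
    filter_upwards [eventually_gt_atTop 1] with t ht
    have ht0 : t ≠ 0 := by positivity
    simp only [Function.comp]
    rw [div_eq_mul_inv, mul_inv, inv_inv]
    ring
  have term2 := aux_slope u α hα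
  have term3 : Tendsto (fun t : ℝ => k * (w t)^2) atTop (𝓝 (k * 1^2)) :=
    (hw1.pow 2).const_mul k
  have hsum := (term1.add term2).add term3
  have hlim : (0:ℝ) + -(u/α) + k * 1^2 = k - u/α := by ring
  rw [hlim] at hsum
  refine Tendsto.congr' ?_ hsum
  filter_upwards [eventually_gt_atTop 1, h1pos] with t ht h1
  have hA' := hA t (by linarith) h1
  have ht0 : t ≠ 0 := by positivity
  have hc0 : c ≠ 0 := hc.ne'
  show t^2 * ((1 - F (x t)) - c * (x t) ^ (-(1/α)) * (1 + k * c * (x t) ^ (-(1/α))))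
      + t * (w t - 1) + k * (w t)^2 = t^2 * ((1 - F (x t)) - 1/t)
  rw [hA']
  field_simp
  ring

/-- Second-order inversion of the tail expansion into a quantile expansion. -/
theorem stmt6 (α₀ c d : ℝ) (hα₀ : 0 < α₀) (hc : 0 < c)
    (F : ℝ → ℝ)
    (hFcont : ContinuousOn F (Set.Ioi 0))
    (hFmono : StrictMonoOn F (Set.Ioi 0))
    (htail : (fun x : ℝ => (1 - F x) -
        c * x ^ (-(1/α₀)) * (1 + (d / c ^ 2 - 1/2) * c * x ^ (-(1/α₀))))
      =o[atTop] fun x : ℝ => x ^ (-(2/α₀)))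
    (q : ℝ → ℝ)
    (hq : ∀ t : ℝ, 1 < t → 0 < q t ∧ F (q t) = 1 - 1/t) :
    (fun t : ℝ => q t - c ^ α₀ * t ^ α₀ * (1 + α₀ * (d / c ^ 2 - 1/2) * t⁻¹))
      =o[atTop] fun t : ℝ => t ^ α₀ * t⁻¹ := by
  set k : ℝ := d / c ^ 2 - 1/2 with hkdef
  have hcα : (0:ℝ) < c ^ α₀ := Real.rpow_pos_of_pos hc α₀
  rw [isLittleO_iff]
  intro ε hε
  set δ : ℝ := ε / c ^ α₀ with hδdef
  have hδ : 0 < δ := div_pos hε hcα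
  have hP := key α₀ c k hα₀ hc F htail (α₀ * k + δ)
  have hM := key α₀ c k hα₀ hc F htail (α₀ * k - δ)
  have hlP : k - (α₀ * k + δ)/α₀ = -(δ/α₀) := by field_simp; ring
  have hlM : k - (α₀ * k - δ)/α₀ = δ/α₀ := by field_simp; ring
  rw [hlP] at hP
  rw [hlM] at hM
  have hsP : ∀ᶠ t : ℝ in atTop,
      t^2 * ((1 - F (c ^ α₀ * t ^ α₀ * (1 + (α₀ * k + δ) / t))) - 1/t) < 0 :=
    hP.eventually_lt_const (neg_lt_zero.mpr (by positivity))
  have hsM : ∀ᶠ t : ℝ in atTop,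
      0 < t^2 * ((1 - F (c ^ α₀ * t ^ α₀ * (1 + (α₀ * k - δ) / t))) - 1/t) :=
    hM.eventually_const_lt (by positivity)
  have haux : ∀ v : ℝ, ∀ᶠ t : ℝ in atTop, 0 < 1 + v / t := by
    intro v
    have hv : Tendsto (fun t : ℝ => 1 + v / t) atTop (𝓝 1) := by
      simpa [div_eq_mul_inv] using (tendsto_inv_atTop_zero.const_mul v).const_add 1
    exact hv.eventually_const_lt (by norm_num)
  filter_upwards [hsP, hsM, haux (α₀ * k + δ), haux (α₀ * k - δ), eventually_gt_atTop 1]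
    with t hlt hgt hpP hpM ht
  obtain ⟨hq0, hqF⟩ := hq t ht
  have ht0 : (0:ℝ) < t := lt_trans one_pos ht
  have htα : 0 < t ^ α₀ := Real.rpow_pos_of_pos ht0 α₀
  set XP : ℝ := c ^ α₀ * t ^ α₀ * (1 + (α₀ * k + δ) / t) with hXP
  set XM : ℝ := c ^ α₀ * t ^ α₀ * (1 + (α₀ * k - δ) / t) with hXM
  have hXPpos : 0 < XP := mul_pos (mul_pos hcα htα) hpP
  have hXMpos : 0 < XM := mul_pos (mul_pos hcα htα) hpM
  have ht2 : (0:ℝ) < t^2 := by positivity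
  have hFP : F (q t) < F XP := by
    have h2 : (1 - F XP) - 1/t < 0 := by nlinarith
    rw [hqF]; linarith
  have hFM : F XM < F (q t) := by
    have h2 : 0 < (1 - F XM) - 1/t := by nlinarith
    rw [hqF]; linarith
  have hltP : q t < XP := by
    by_contra h
    push_neg at h
    exact absurd (hFmono.monotoneOn (Set.mem_Ioi.mpr hXPpos) (Set.mem_Ioi.mpr hq0) h)
      (not_le.mpr hFP)
  have hgtM : XM < q t := by
    by_contra h
    push_neg at h
    exact absurd (hFmono.monotoneOn (Set.mem_Ioi.mpr hq0) (Set.mem_Ioi.mpr hXMpos) h)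
      (not_le.mpr hFM)
  have hgpos : 0 < t ^ α₀ * t⁻¹ := by positivity
  rw [Real.norm_eq_abs, Real.norm_eq_abs, abs_of_pos hgpos, abs_le]
  have hδc : c ^ α₀ * δ = ε := by
    rw [hδdef]
    field_simp
  have eP : XP = c ^ α₀ * t ^ α₀ * (1 + α₀ * k * t⁻¹) + ε * (t ^ α₀ * t⁻¹) := by
    rw [hXP, ← hδc]
    field_simp
    ring
  have eM : XM = c ^ α₀ * t ^ α₀ * (1 + α₀ * k * t⁻¹) - ε * (t ^ α₀ * t⁻¹) := by
    rw [hXM, ← hδc]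
    field_simp
    ring
  constructor
  · linarith
  · linarith
end

section
/- Let (X₁,...,X_n) have joint distribution F(x₁,...,x_n) = exp[Σ_{k∈D̄} θ_k^α - Σ_{k=1}^K {θ_k + τ^{1/α₀} Σ_{j=1}^n ω_{kj}^{1/α} x_j^{-1/α₀}}^α], where X_j = ε_j Y_j with ε_j independent Fréchet(0,τ,1/α₀) and Y_j = (Σ_k ω_{kj}^{1/α} Z_k)^{α₀}, Z_k ~ H(α,α,θ_k) independent. Then this formula holds: the joint CDF equals the product over k of the Laplace transform of Z_k evaluated at τ^{1/α₀} Σ_j ω_{kj}^{1/α} x_j^{-1/α₀}. -/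
open MeasureTheory Real ProbabilityTheory
open scoped ENNReal NNReal

private lemma aux_lintegral_pi_prod : ∀ (m : ℕ) (μ : Fin m → Measure ℝ),
    (∀ i, IsProbabilityMeasure (μ i)) → ∀ (f : Fin m → ℝ → ℝ≥0∞), (∀ i, Measurable (f i)) →
    ∫⁻ x : Fin m → ℝ, ∏ i, f i (x i) ∂Measure.pi μ = ∏ i, ∫⁻ t, f i t ∂(μ i) := by
  intro m
  induction m with
  | zero =>
      intro μ hμ f hf
      simp only [Finset.univ_eq_empty, Finset.prod_empty]
      rw [lintegral_one]
      haveI := hμ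
      rw [Measure.pi_univ]
      simp
  | succ m ih =>
      intro μ hμ f hf
      haveI := hμ
      have hmp := (measurePreserving_piFinSuccAbove (α := fun _ : Fin (m+1) => ℝ) μ 0).symm
      rw [← hmp.lintegral_comp_emb
        (MeasurableEquiv.measurableEmbedding _) (fun x => ∏ i, f i (x i))]
      have hx : ∀ p : ℝ × (Fin m → ℝ),
          (∏ i, f i (((MeasurableEquiv.piFinSuccAbove (fun _ => ℝ) 0).symm p) i))
            = f 0 p.1 * ∏ i : Fin m, f i.succ (p.2 i) := by
        intro p
        simp_rw [MeasurableEquiv.piFinSuccAbove_symm_apply, Fin.insertNthEquiv,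
          Fin.prod_univ_succ, Fin.insertNth_zero]
        simp [Fin.zero_succAbove]
      simp_rw [hx]
      rw [lintegral_prod_mul (f := f 0) (g := fun v : Fin m → ℝ => ∏ i, f i.succ (v i))
        (hf 0).aemeasurable
        ((Finset.measurable_prod Finset.univ fun i _ =>
          (hf i.succ).comp (measurable_pi_apply i)).aemeasurable)]
      simp only [Fin.zero_succAbove]
      rw [ih (fun i => μ i.succ) (fun i => hμ _) (fun i => f i.succ) (fun i => hf _),
        Fin.prod_univ_succ]

private lemma aux_map_pi {Ω ι : Type*} [MeasurableSpace Ω] [Fintype ι] (P : Measure Ω)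
    [IsProbabilityMeasure P] (f : ι → Ω → ℝ) (hf : ∀ i, Measurable (f i))
    (h : iIndepFun (m := fun _ : ι => (inferInstance : MeasurableSpace ℝ)) f P) :
    P.map (fun ω i => f i ω) = Measure.pi (fun i => P.map (f i)) := by
  haveI : ∀ i, IsProbabilityMeasure (P.map (f i)) :=
    fun i => Measure.isProbabilityMeasure_map (hf i).aemeasurable
  refine (Measure.pi_eq fun s hs => ?_).symm
  rw [Measure.map_apply (measurable_pi_lambda _ fun i => hf i) (MeasurableSet.univ_pi hs)]
  have hpre : (fun ω i => f i ω) ⁻¹' (Set.pi Set.univ s) = ⋂ i, f i ⁻¹' s i := by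
    ext ω; simp [Set.mem_pi]
  rw [hpre, h.meas_iInter (fun i => ⟨s i, hs i, rfl⟩)]
  exact Finset.prod_congr rfl fun i _ =>
    (Measure.map_apply (hf i) (hs i)).symm

/-- Joint distribution function of the max-id model: the joint CDF equals the product over
knots of the Laplace transform of `Z_k` evaluated at `τ^{1/α₀} ∑_j ω_{kj}^{1/α} x_j^{-1/α₀}`. -/
theorem stmt8 {Ω : Type*} [MeasurableSpace Ω] (P : Measure Ω) [IsProbabilityMeasure P]
    (n K : ℕ) (α α₀ τ : ℝ) (hα : α ∈ Set.Ioo (0:ℝ) 1) (hα₀ : 0 < α₀) (hτ : 0 < τ)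
    (w : Fin K → Fin n → ℝ) (hw : ∀ k j, 0 ≤ w k j)
    (θ : Fin K → ℝ) (hθ : ∀ k, 0 ≤ θ k)
    (ε : Fin n → Ω → ℝ) (Z : Fin K → Ω → ℝ)
    (hmeasε : ∀ j, Measurable (ε j)) (hmeasZ : ∀ k, Measurable (Z k))
    (hZpos : ∀ k ω, 0 < Z k ω)
    (hindep : iIndepFun (m := fun _ : Fin n ⊕ Fin K => (inferInstance : MeasurableSpace ℝ))
      (Sum.elim ε Z) P)
    (hεcdf : ∀ j, ∀ x : ℝ, 0 < x →
      (P {ω | ε j ω ≤ x}).toReal = Real.exp (-((τ / x) ^ (1/α₀))))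
    (hZlap : ∀ k, ∀ s : ℝ, 0 ≤ s →
      ∫ ω, Real.exp (-(s * Z k ω)) ∂P = Real.exp (θ k ^ α - (θ k + s) ^ α))
    (x : Fin n → ℝ) (hx : ∀ j, 0 < x j) :
    (P {ω | ∀ j, ε j ω * (∑ k, w k j ^ (1/α) * Z k ω) ^ α₀ ≤ x j}).toReal =
      ∏ k, Real.exp (θ k ^ α -
        (θ k + τ ^ (1/α₀) * ∑ j, w k j ^ (1/α) * x j ^ (-(1/α₀))) ^ α) := by
  classical
  -- notation
  set μ : (Fin n ⊕ Fin K) → Measure ℝ := fun i => P.map (Sum.elim ε Z i) with hμdef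
  have hmeas : ∀ i, Measurable (Sum.elim ε Z i) := by
    rintro (j | k)
    · exact hmeasε j
    · exact hmeasZ k
  haveI : ∀ i, IsProbabilityMeasure (μ i) :=
    fun i => Measure.isProbabilityMeasure_map (hmeas i).aemeasurable
  have hmap : P.map (fun ω i => Sum.elim ε Z i ω) = Measure.pi μ :=
    aux_map_pi P _ hmeas hindep
  -- constants
  set c : Fin n → ℝ := fun j => (τ / x j) ^ (1/α₀) with hcdef
  have hc : ∀ j, 0 < c j := fun j => rpow_pos_of_pos (div_pos hτ (hx j)) _
  set s : Fin K → ℝ := fun k => ∑ j, c j * w k j ^ (1/α) with hsdef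
  have hs : ∀ k, 0 ≤ s k := fun k => Finset.sum_nonneg fun j _ =>
    mul_nonneg (hc j).le (rpow_nonneg (hw k j) _)
  -- the event as a preimage
  set A : Set ((Fin n ⊕ Fin K) → ℝ) :=
    {g | ∀ j, g (Sum.inl j) * (∑ k, w k j ^ (1/α) * g (Sum.inr k)) ^ α₀ ≤ x j} with hAdef
  have hA : MeasurableSet A := by
    have : A = ⋂ j, (fun g : (Fin n ⊕ Fin K) → ℝ =>
        g (Sum.inl j) * (∑ k, w k j ^ (1/α) * g (Sum.inr k)) ^ α₀) ⁻¹' Set.Iic (x j) := by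
      ext g; simp [hAdef, Set.mem_iInter]
    rw [this]
    refine MeasurableSet.iInter fun j => ?_
    have hm : Measurable (fun g : (Fin n ⊕ Fin K) → ℝ =>
        g (Sum.inl j) * (∑ k, w k j ^ (1/α) * g (Sum.inr k)) ^ α₀) :=
      (measurable_pi_apply _).mul
      ((Real.continuous_rpow_const hα₀.le).measurable.comp
        (Finset.measurable_sum Finset.univ fun k _ =>
          (measurable_pi_apply (Sum.inr k)).const_mul _))
    exact hm measurableSet_Iic
  have hev : {ω | ∀ j, ε j ω * (∑ k, w k j ^ (1/α) * Z k ω) ^ α₀ ≤ x j}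
      = (fun ω i => Sum.elim ε Z i ω) ⁻¹' A := rfl
  have hPE : P {ω | ∀ j, ε j ω * (∑ k, w k j ^ (1/α) * Z k ω) ^ α₀ ≤ x j}
      = Measure.pi μ A := by
    rw [hev, ← Measure.map_apply (measurable_pi_lambda _ fun i => hmeas i) hA, hmap]
  -- switch to product measure
  set e := MeasurableEquiv.sumPiEquivProdPi (fun _ : Fin n ⊕ Fin K => ℝ) with hedef
  set B : Set ((Fin n → ℝ) × (Fin K → ℝ)) :=
    {p | ∀ j, p.1 j * (∑ k, w k j ^ (1/α) * p.2 k) ^ α₀ ≤ x j} with hBdef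
  have hB : MeasurableSet B := by
    have : B = ⋂ j, (fun p : (Fin n → ℝ) × (Fin K → ℝ) =>
        p.1 j * (∑ k, w k j ^ (1/α) * p.2 k) ^ α₀) ⁻¹' Set.Iic (x j) := by
      ext p; simp [hBdef, Set.mem_iInter]
    rw [this]
    refine MeasurableSet.iInter fun j => ?_
    have hm : Measurable (fun p : (Fin n → ℝ) × (Fin K → ℝ) =>
        p.1 j * (∑ k, w k j ^ (1/α) * p.2 k) ^ α₀) :=
      ((measurable_pi_apply j).comp measurable_fst).mul
      ((Real.continuous_rpow_const hα₀.le).measurable.comp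
        (Finset.measurable_sum Finset.univ fun k _ =>
          ((measurable_pi_apply k).comp measurable_snd).const_mul _))
    exact hm measurableSet_Iic
  have heA : e ⁻¹' B = A := rfl
  have hmp := measurePreserving_sumPiEquivProdPi μ
  have hpiA : Measure.pi μ A
      = ((Measure.pi fun j => μ (Sum.inl j)).prod (Measure.pi fun k => μ (Sum.inr k))) B := by
    rw [← heA, hmp.measure_preimage_equiv]
  -- apply Fubini
  have hprod : ((Measure.pi fun j => μ (Sum.inl j)).prod (Measure.pi fun k => μ (Sum.inr k))) B
      = ∫⁻ v, (Measure.pi fun j => μ (Sum.inl j)) ((fun u => (u, v)) ⁻¹' B)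
          ∂(Measure.pi fun k => μ (Sum.inr k)) :=
    Measure.prod_apply_symm hB
  -- section measure computation
  have hsection : ∀ v : Fin K → ℝ, (∀ k, 0 < v k) →
      (Measure.pi fun j => μ (Sum.inl j)) ((fun u => (u, v)) ⁻¹' B)
        = ∏ k, ENNReal.ofReal (Real.exp (-(s k * v k))) := by
    intro v hv
    have hSrw : (fun u => (u, v)) ⁻¹' B
        = Set.pi Set.univ (fun j => {t : ℝ | t * (∑ k, w k j ^ (1/α) * v k) ^ α₀ ≤ x j}) := by
      ext u; simp [hBdef, Set.mem_pi]
    rw [hSrw, Measure.pi_pi]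
    have hfac : ∀ j, μ (Sum.inl j) {t : ℝ | t * (∑ k, w k j ^ (1/α) * v k) ^ α₀ ≤ x j}
        = ENNReal.ofReal (Real.exp (-(c j * ∑ k, w k j ^ (1/α) * v k))) := by
      intro j
      set S : ℝ := ∑ k, w k j ^ (1/α) * v k with hSdef
      have hS0 : 0 ≤ S := Finset.sum_nonneg fun k _ =>
        mul_nonneg (rpow_nonneg (hw k j) _) (hv k).le
      rcases eq_or_lt_of_le hS0 with hS | hS
      · -- S = 0
        have hSet : {t : ℝ | t * S ^ α₀ ≤ x j} = Set.univ := by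
          ext t
          simp [← hS, Real.zero_rpow hα₀.ne', (hx j).le]
        rw [hSet, ← hS]
        simp [mul_zero, Real.exp_zero]
      · -- S > 0
        have hSα : 0 < S ^ α₀ := rpow_pos_of_pos hS _
        have hSet : {t : ℝ | t * S ^ α₀ ≤ x j} = Set.Iic (x j / S ^ α₀) := by
          ext t
          simp [Set.mem_Iic, le_div_iff₀ hSα]
        rw [hSet]
        have hy : 0 < x j / S ^ α₀ := div_pos (hx j) hSα
        have hμIic : μ (Sum.inl j) (Set.Iic (x j / S ^ α₀))
            = P {ω | ε j ω ≤ x j / S ^ α₀} := by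
          rw [hμdef]
          rw [Measure.map_apply (hmeas (Sum.inl j)) measurableSet_Iic]
          rfl
        rw [hμIic]
        have hne : P {ω | ε j ω ≤ x j / S ^ α₀} ≠ ⊤ := measure_ne_top _ _
        have hval := hεcdf j _ hy
        have harg : (τ / (x j / S ^ α₀)) ^ (1/α₀) = c j * S := by
          have h1 : τ / (x j / S ^ α₀) = (τ / x j) * S ^ α₀ := by
            field_simp
          have h2 : (S ^ α₀) ^ (1/α₀ : ℝ) = S := by
            rw [← Real.rpow_mul hS0, mul_one_div_cancel hα₀.ne', Real.rpow_one]
          rw [h1, Real.mul_rpow (div_pos hτ (hx j)).le hSα.le, h2]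
        rw [harg] at hval
        rw [← ENNReal.ofReal_toReal hne, hval]
    rw [Finset.prod_congr rfl fun j _ => hfac j]
    rw [← ENNReal.ofReal_prod_of_nonneg fun j _ => (Real.exp_pos _).le]
    rw [← Real.exp_sum]
    have h2 : ∑ j, c j * ∑ k, w k j ^ (1/α) * v k = ∑ k, s k * v k := by
      simp only [hsdef, Finset.mul_sum, Finset.sum_mul]
      rw [Finset.sum_comm]
      exact Finset.sum_congr rfl fun k _ => Finset.sum_congr rfl fun j _ => by ring
    have hsum : ∑ j, -(c j * ∑ k, w k j ^ (1/α) * v k) = ∑ k, -(s k * v k) := by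
      rw [Finset.sum_neg_distrib, h2, ← Finset.sum_neg_distrib]
    rw [hsum, Real.exp_sum, ENNReal.ofReal_prod_of_nonneg fun k _ => (Real.exp_pos _).le]
  -- almost everywhere positivity of the Z-coordinates
  have hae : ∀ᵐ v ∂(Measure.pi fun k => μ (Sum.inr k)), ∀ k, 0 < v k := by
    rw [ae_iff]
    have hsub : {v : Fin K → ℝ | ¬ ∀ k, 0 < v k}
        ⊆ ⋃ k, (fun v : Fin K → ℝ => v k) ⁻¹' Set.Iic 0 := by
      intro v hv
      push_neg at hv
      obtain ⟨k, hk⟩ := hv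
      exact Set.mem_iUnion.2 ⟨k, by simpa using hk⟩
    refine measure_mono_null hsub (measure_iUnion_null fun k => ?_)
    have : (fun v : Fin K → ℝ => v k) ⁻¹' Set.Iic 0
        = Set.pi Set.univ (Function.update (fun _ : Fin K => (Set.univ : Set ℝ)) k
            (Set.Iic 0)) := by
      rw [← Set.eval_preimage]
    rw [this, Measure.pi_pi]
    refine Finset.prod_eq_zero (Finset.mem_univ k) ?_
    rw [Function.update_self, hμdef]
    rw [Measure.map_apply (hmeas (Sum.inr k)) measurableSet_Iic]
    have : Sum.elim ε Z (Sum.inr k) ⁻¹' Set.Iic 0 = (∅ : Set Ω) := by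
      ext ω
      simp only [Set.mem_preimage, Set.mem_Iic, Set.mem_empty_iff_false, iff_false, not_le]
      exact hZpos k ω
    rw [this, measure_empty]
  -- put it together
  have hlint : ∫⁻ v, (Measure.pi fun j => μ (Sum.inl j)) ((fun u => (u, v)) ⁻¹' B)
        ∂(Measure.pi fun k => μ (Sum.inr k))
      = ∫⁻ v, ∏ k, ENNReal.ofReal (Real.exp (-(s k * v k)))
        ∂(Measure.pi fun k => μ (Sum.inr k)) := by
    refine lintegral_congr_ae ?_
    filter_upwards [hae] with v hv
    exact hsection v hv
  have hK : ∫⁻ v, ∏ k, ENNReal.ofReal (Real.exp (-(s k * v k)))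
        ∂(Measure.pi fun k => μ (Sum.inr k))
      = ∏ k, ∫⁻ t, ENNReal.ofReal (Real.exp (-(s k * t))) ∂(μ (Sum.inr k)) :=
    aux_lintegral_pi_prod K (fun k => μ (Sum.inr k)) (fun k => inferInstance)
      (fun k t => ENNReal.ofReal (Real.exp (-(s k * t))))
      (fun k => ((measurable_id.const_mul (s k)).neg.exp).ennreal_ofReal)
  have hlap : ∀ k, ∫⁻ t, ENNReal.ofReal (Real.exp (-(s k * t))) ∂(μ (Sum.inr k))
      = ENNReal.ofReal (Real.exp (θ k ^ α - (θ k + s k) ^ α)) := by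
    intro k
    have hmf : Measurable (fun t : ℝ => ENNReal.ofReal (Real.exp (-(s k * t)))) :=
      ((measurable_id.const_mul (s k)).neg.exp).ennreal_ofReal
    rw [hμdef, lintegral_map hmf (hmeas (Sum.inr k))]
    simp only [Sum.elim_inr]
    have hint : Integrable (fun ω => Real.exp (-(s k * Z k ω))) P := by
      refine Integrable.mono' (integrable_const (1 : ℝ))
        (((hmeasZ k).const_mul (s k)).neg.exp.aestronglyMeasurable)
        (Filter.Eventually.of_forall fun ω => ?_)
      rw [Real.norm_eq_abs, abs_of_pos (Real.exp_pos _)]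
      exact Real.exp_le_one_iff.2
        (neg_nonpos.2 (mul_nonneg (hs k) (hZpos k ω).le))
    have := ofReal_integral_eq_lintegral_ofReal hint
      (Filter.Eventually.of_forall fun ω => (Real.exp_pos _).le)
    rw [← this, hZlap k (s k) (hs k)]
  -- final computation
  rw [hPE, hpiA, hprod, hlint, hK, Finset.prod_congr rfl fun k _ => hlap k]
  rw [ENNReal.toReal_prod]
  refine Finset.prod_congr rfl fun k _ => ?_
  rw [ENNReal.toReal_ofReal (Real.exp_pos _).le]
  have hsk : s k = τ ^ (1/α₀) * ∑ j, w k j ^ (1/α) * x j ^ (-(1/α₀)) := by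
    show (∑ j, c j * w k j ^ (1/α)) = _
    rw [Finset.mul_sum]
    refine Finset.sum_congr rfl fun j _ => ?_
    have hcj : c j = τ ^ (1/α₀) * x j ^ (-(1/α₀)) := by
      show (τ / x j) ^ (1/α₀) = _
      rw [Real.div_rpow hτ.le (hx j).le, Real.rpow_neg (hx j).le, div_eq_mul_inv]
    rw [hcj]
    ring
  rw [hsk]
end

section
/- Let q_i(t) = c_i^{α₀} t^{α₀}(1 + O(t^{-1})) and q_j(t) = c_j^{α₀} t^{α₀}(1 + O(t^{-1})) as t → ∞ with c_i, c_j > 0, and suppose the joint distribution F_{ij}(x,y) = exp[Σ_k θ_k^α - Σ_k (θ_k + a_k x^{-1/α₀} + b_k y^{-1/α₀})^α] with all θ_k > 0, α ∈ (0,1), a_k, b_k ≥ 0 satisfying α Σ_k θ_k^{α-1} a_k = c_i and α Σ_k θ_k^{α-1} b_k = c_j. Then log F_{ij}(q_i(t), q_j(t)) = -2/t - O(t^{-2}) as t → ∞, and consequently t·[1 - 2(1 - 1/t) + F_{ij}(q_i(t), q_j(t))] → 0, i.e., the pair is asymptotically independent with χ = 0. -/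
open Real Filter Asymptotics

lemma L1 (c p : ℝ) (hc : 0 < c) (hp : p ≤ 1) (u : ℝ) (hu : 0 ≤ u) :
    |(c + u) ^ p - c ^ p| ≤ |p| * c ^ (p - 1) * u := by
  have key := norm_image_sub_le_of_norm_deriv_le_segment'
    (f := fun x => (c + x) ^ p) (f' := fun x => p * (c + x) ^ (p - 1))
    (a := 0) (b := u) (C := |p| * c ^ (p - 1)) ?_ ?_ u (Set.right_mem_Icc.2 hu)
  · simpa [abs_of_nonneg, hu] using key
  · intro x hx
    have hcx : 0 < c + x := by linarith [hx.1]
    exact ((Real.hasDerivAt_rpow_const (x := c + x) (p := p) (Or.inl hcx.ne'))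
      |>.comp x (by simpa using (hasDerivAt_id x).const_add c) |>.hasDerivWithinAt).congr_deriv
      (by ring)
  · intro x hx
    have hcx : 0 < c + x := by linarith [hx.1]
    have : (c + x) ^ (p - 1) ≤ c ^ (p - 1) :=
      Real.rpow_le_rpow_of_nonpos hc (by linarith [hx.1]) (by linarith)
    have h2 : (0:ℝ) ≤ (c + x) ^ (p - 1) := (Real.rpow_pos_of_pos hcx _).le
    rw [norm_mul, Real.norm_eq_abs, Real.norm_eq_abs, abs_of_nonneg h2]
    exact mul_le_mul_of_nonneg_left this (abs_nonneg p)

lemma L2 (c α : ℝ) (hc : 0 < c) (hα : 0 < α) (hα1 : α < 1) (u : ℝ) (hu : 0 ≤ u) :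
    |(c + u) ^ α - c ^ α - α * c ^ (α - 1) * u| ≤ α * (1 - α) * c ^ (α - 2) * u ^ 2 := by
  have key := norm_image_sub_le_of_norm_deriv_le_segment'
    (f := fun x => (c + x) ^ α - α * c ^ (α - 1) * x)
    (f' := fun x => α * (c + x) ^ (α - 1) - α * c ^ (α - 1))
    (a := 0) (b := u) (C := α * (1 - α) * c ^ (α - 2) * u) ?_ ?_ u (Set.right_mem_Icc.2 hu)
  · have : ((c + u) ^ α - α * c ^ (α - 1) * u) - ((c + 0) ^ α - α * c ^ (α - 1) * 0)
        = (c + u) ^ α - c ^ α - α * c ^ (α - 1) * u := by ring_nf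
    rw [Real.norm_eq_abs, this] at key
    calc |(c + u) ^ α - c ^ α - α * c ^ (α - 1) * u| ≤ α * (1 - α) * c ^ (α - 2) * u * (u - 0) :=
          key
      _ = α * (1 - α) * c ^ (α - 2) * u ^ 2 := by ring
  · intro x hx
    have hcx : 0 < c + x := by linarith [hx.1]
    have h1 : HasDerivAt (fun x => (c + x) ^ α) (α * (c + x) ^ (α - 1)) x := by
      have := (Real.hasDerivAt_rpow_const (x := c + x) (p := α) (Or.inl hcx.ne')).comp x
        (by simpa using (hasDerivAt_id x).const_add c)
      simpa [mul_comm, Function.comp_def] using this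
    exact ((h1.sub ((hasDerivAt_id x).const_mul (α * c ^ (α - 1)))).hasDerivWithinAt).congr_deriv
      (by ring)
  · intro x hx
    have hx0 := hx.1
    have habs : |(c + x) ^ (α - 1) - c ^ (α - 1)| ≤ (1 - α) * c ^ (α - 2) * x := by
      have := L1 c (α - 1) hc (by linarith) x hx0
      have he : α - 1 - 1 = α - 2 := by ring
      rw [he, abs_of_neg (by linarith : α - 1 < 0)] at this
      linarith [this]
    rw [Real.norm_eq_abs]
    have : |α * (c + x) ^ (α - 1) - α * c ^ (α - 1)| = α * |(c + x) ^ (α - 1) - c ^ (α - 1)| := by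
      rw [← mul_sub, abs_mul, abs_of_pos hα]
    rw [this]
    calc α * |(c + x) ^ (α - 1) - c ^ (α - 1)| ≤ α * ((1 - α) * c ^ (α - 2) * x) :=
          mul_le_mul_of_nonneg_left habs hα.le
      _ ≤ α * (1 - α) * c ^ (α - 2) * u := by
          have : x ≤ u := le_of_lt hx.2
          have hcp : (0:ℝ) ≤ c ^ (α - 2) := (Real.rpow_pos_of_pos hc _).le
          nlinarith [mul_le_mul_of_nonneg_left this (mul_nonneg (mul_nonneg hα.le (by linarith : (0:ℝ) ≤ 1 - α)) hcp)]

lemma Linv : (fun t : ℝ => t⁻¹ * t⁻¹) =ᶠ[atTop] fun t : ℝ => t ^ (-2 : ℝ) := by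
  filter_upwards [eventually_gt_atTop (0:ℝ)] with t ht
  rw [Real.rpow_neg ht.le, show (2:ℝ) = ((2:ℕ):ℝ) by norm_num, Real.rpow_natCast]
  rw [sq t, mul_inv]

lemma L3 (α₀ c : ℝ) (hα₀ : 0 < α₀) (hc : 0 < c) (q : ℝ → ℝ)
    (hpos : ∀ᶠ t in atTop, 0 < q t)
    (hq : (fun t : ℝ => q t - c ^ α₀ * t ^ α₀) =O[atTop] fun t : ℝ => t ^ α₀ * t⁻¹) :
    (fun t : ℝ => q t ^ (-(1/α₀)) - (c * t)⁻¹) =O[atTop] fun t : ℝ => t ^ (-2 : ℝ) := by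
  set p : ℝ := -(1/α₀) with hp
  set ε : ℝ → ℝ := fun t => (q t - c ^ α₀ * t ^ α₀) * (c ^ α₀ * t ^ α₀)⁻¹ with hεdef
  have h1 : (fun t : ℝ => (c ^ α₀ * t ^ α₀)⁻¹) =O[atTop] fun t : ℝ => (t ^ α₀)⁻¹ := by
    simp only [mul_inv]
    exact (isBigO_refl _ _).const_mul_left _
  have hε : ε =O[atTop] fun t : ℝ => t⁻¹ := by
    refine (hq.mul h1).trans (EventuallyEq.isBigO ?_)
    filter_upwards [eventually_gt_atTop (0:ℝ)] with t ht
    have : t ^ α₀ ≠ 0 := (Real.rpow_pos_of_pos ht _).ne'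
    field_simp
  have hεt : Tendsto ε atTop (nhds 0) := hε.trans_tendsto tendsto_inv_atTop_zero
  have hδ : (fun x : ℝ => (1 + x) ^ p - 1) =O[nhds (0:ℝ)] fun x => x := by
    have hd : HasDerivAt (fun x : ℝ => (1 + x) ^ p) (p * (1 + 0 : ℝ) ^ (p - 1)) 0 := by
      have := (Real.hasDerivAt_rpow_const (x := (1:ℝ) + 0) (p := p)
        (Or.inl (by norm_num))).comp 0 (by simpa using (hasDerivAt_id (0:ℝ)).const_add 1)
      simpa [mul_comm, Function.comp_def] using this
    simpa using hd.isBigO_sub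
  have hcomp : (fun t : ℝ => (1 + ε t) ^ p - 1) =O[atTop] ε := by
    simpa [Function.comp_def] using hδ.comp_tendsto hεt
  have heq : (fun t : ℝ => q t ^ p - (c * t)⁻¹) =ᶠ[atTop]
      fun t : ℝ => (c * t)⁻¹ * ((1 + ε t) ^ p - 1) := by
    filter_upwards [eventually_gt_atTop (0:ℝ), hpos] with t ht hqt
    have hA : 0 < c ^ α₀ * t ^ α₀ :=
      mul_pos (Real.rpow_pos_of_pos hc _) (Real.rpow_pos_of_pos ht _)
    have h1ε : 1 + ε t = q t * (c ^ α₀ * t ^ α₀)⁻¹ := by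
      rw [hεdef]; field_simp; ring
    have hq' : q t = (c ^ α₀ * t ^ α₀) * (1 + ε t) := by
      rw [h1ε]; field_simp
    have h1εpos : 0 < 1 + ε t := by
      rw [h1ε]; positivity
    have hAp : (c ^ α₀ * t ^ α₀) ^ p = (c * t)⁻¹ := by
      rw [Real.mul_rpow (Real.rpow_pos_of_pos hc _).le (Real.rpow_pos_of_pos ht _).le,
        ← Real.rpow_mul hc.le, ← Real.rpow_mul ht.le,
        show α₀ * p = -1 by rw [hp]; field_simp,
        Real.rpow_neg_one, Real.rpow_neg_one, mul_inv]
    rw [hq', Real.mul_rpow hA.le h1εpos.le, hAp]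
    ring
  have hconst : (fun t : ℝ => (c * t)⁻¹) =O[atTop] fun t : ℝ => t⁻¹ := by
    simp only [mul_inv]
    exact (isBigO_refl _ _).const_mul_left _
  exact heq.trans_isBigO ((hconst.mul (hcomp.trans hε)).trans Linv.isBigO)

/-- When both locations are covered only by tilted knots, the joint CDF along the
diagonal of quantiles satisfies `log F_{ij}(q_i(t), q_j(t)) = -2/t - O(t^{-2})`, and
the pair is asymptotically independent (`χ = 0`). -/
theorem stmt11 (K : ℕ) (α α₀ ci cj : ℝ) (hα : α ∈ Set.Ioo (0:ℝ) 1) (hα₀ : 0 < α₀)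
    (hci : 0 < ci) (hcj : 0 < cj)
    (θ a b : Fin K → ℝ) (hθ : ∀ k, 0 < θ k) (ha : ∀ k, 0 ≤ a k) (hb : ∀ k, 0 ≤ b k)
    (hca : α * ∑ k, θ k ^ (α - 1) * a k = ci)
    (hcb : α * ∑ k, θ k ^ (α - 1) * b k = cj)
    (qi qj : ℝ → ℝ)
    (hqipos : ∀ᶠ t in atTop, 0 < qi t) (hqjpos : ∀ᶠ t in atTop, 0 < qj t)
    (hqi : (fun t : ℝ => qi t - ci ^ α₀ * t ^ α₀) =O[atTop] fun t : ℝ => t ^ α₀ * t⁻¹)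
    (hqj : (fun t : ℝ => qj t - cj ^ α₀ * t ^ α₀) =O[atTop] fun t : ℝ => t ^ α₀ * t⁻¹)
    (Fij : ℝ → ℝ → ℝ)
    (hFij : ∀ x y : ℝ, 0 < x → 0 < y → Fij x y =
      Real.exp ((∑ k, θ k ^ α) -
        ∑ k, (θ k + a k * x ^ (-(1/α₀)) + b k * y ^ (-(1/α₀))) ^ α)) :
    ((fun t : ℝ => Real.log (Fij (qi t) (qj t)) + 2 / t) =O[atTop] fun t : ℝ => t ^ (-2 : ℝ)) ∧
      Tendsto (fun t : ℝ => t * (1 - 2 * (1 - 1/t) + Fij (qi t) (qj t))) atTop (nhds 0) := by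
  obtain ⟨hα0, hα1⟩ := hα
  set ei : ℝ → ℝ := fun t => qi t ^ (-(1/α₀)) with heidef
  set ej : ℝ → ℝ := fun t => qj t ^ (-(1/α₀)) with hejdef
  have hEi := L3 α₀ ci hα₀ hci qi hqipos hqi
  have hEj := L3 α₀ cj hα₀ hcj qj hqjpos hqj
  have h2to1 : (fun t : ℝ => t ^ (-2 : ℝ)) =O[atTop] fun t : ℝ => t⁻¹ := by
    refine IsBigO.of_bound 1 ?_
    filter_upwards [eventually_ge_atTop (1:ℝ)] with t ht
    rw [one_mul, Real.norm_eq_abs, Real.norm_eq_abs, ← Real.rpow_neg_one t,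
      abs_of_nonneg (Real.rpow_nonneg (by linarith) _),
      abs_of_nonneg (Real.rpow_nonneg (by linarith) _)]
    exact Real.rpow_le_rpow_of_exponent_le ht (by norm_num)
  have hconsti : (fun t : ℝ => (ci * t)⁻¹) =O[atTop] fun t : ℝ => t⁻¹ := by
    simp only [mul_inv]; exact (isBigO_refl _ _).const_mul_left _
  have hconstj : (fun t : ℝ => (cj * t)⁻¹) =O[atTop] fun t : ℝ => t⁻¹ := by
    simp only [mul_inv]; exact (isBigO_refl _ _).const_mul_left _
  have hei : ei =O[atTop] fun t : ℝ => t⁻¹ := by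
    have : ei = fun t => (ei t - (ci * t)⁻¹) + (ci * t)⁻¹ := by funext t; ring
    rw [this]; exact (hEi.trans h2to1).add hconsti
  have hej : ej =O[atTop] fun t : ℝ => t⁻¹ := by
    have : ej = fun t => (ej t - (cj * t)⁻¹) + (cj * t)⁻¹ := by funext t; ring
    rw [this]; exact (hEj.trans h2to1).add hconstj
  set u : Fin K → ℝ → ℝ := fun k t => a k * ei t + b k * ej t with hudef
  have hu : ∀ k, (u k) =O[atTop] fun t : ℝ => t⁻¹ := fun k =>
    (hei.const_mul_left (a k)).add (hej.const_mul_left (b k))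
  have hu0 : ∀ᶠ t in atTop, ∀ k, 0 ≤ u k t := by
    filter_upwards [hqipos, hqjpos] with t hi hj k
    have h1 : (0:ℝ) ≤ ei t := (Real.rpow_pos_of_pos hi _).le
    have h2 : (0:ℝ) ≤ ej t := (Real.rpow_pos_of_pos hj _).le
    have := ha k; have := hb k
    positivity
  set R : Fin K → ℝ → ℝ :=
    fun k t => (θ k + u k t) ^ α - θ k ^ α - α * θ k ^ (α - 1) * u k t with hRdef
  have hR : ∀ k, (R k) =O[atTop] fun t : ℝ => t ^ (-2 : ℝ) := by
    intro k
    have h1 : (R k) =O[atTop] fun t => u k t * u k t := by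
      refine IsBigO.of_bound (α * (1 - α) * θ k ^ (α - 2)) ?_
      filter_upwards [hu0] with t ht
      have h2 := L2 (θ k) α (hθ k) hα0 hα1 (u k t) (ht k)
      rw [Real.norm_eq_abs, Real.norm_eq_abs, abs_of_nonneg (mul_nonneg (ht k) (ht k)),
        ← sq]
      exact h2
    exact (h1.trans ((hu k).mul (hu k))).trans Linv.isBigO
  have hsumR : (fun t => ∑ k, R k t) =O[atTop] fun t : ℝ => t ^ (-2 : ℝ) :=
    (IsBigO.sum (s := Finset.univ) fun k _ => hR k).congr_left (fun t => by simp [Finset.sum_apply])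
  -- the key eventual identity for log Fij + 2/t
  have hkey : (fun t : ℝ => Real.log (Fij (qi t) (qj t)) + 2 / t) =ᶠ[atTop]
      fun t => -((∑ k, R k t) +
        (ci * (ei t - (ci * t)⁻¹) + cj * (ej t - (cj * t)⁻¹))) := by
    filter_upwards [hqipos, hqjpos, eventually_gt_atTop (0:ℝ)] with t hi hj ht
    rw [hFij (qi t) (qj t) hi hj, Real.log_exp]
    have hsum1 : ∑ k, (θ k + u k t) ^ α
        = (∑ k, R k t) + (∑ k, θ k ^ α) + ∑ k, α * θ k ^ (α - 1) * u k t := by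
      rw [← Finset.sum_add_distrib, ← Finset.sum_add_distrib]
      exact Finset.sum_congr rfl fun k _ => by simp [hRdef]; ring
    have hsum2 : ∑ k, α * θ k ^ (α - 1) * u k t = ci * ei t + cj * ej t := by
      calc ∑ k, α * θ k ^ (α - 1) * (a k * ei t + b k * ej t)
          = (α * ∑ k, θ k ^ (α - 1) * a k) * ei t
            + (α * ∑ k, θ k ^ (α - 1) * b k) * ej t := by
            rw [Finset.mul_sum, Finset.mul_sum, Finset.sum_mul, Finset.sum_mul,
              ← Finset.sum_add_distrib]
            exact Finset.sum_congr rfl fun k _ => by ring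
        _ = ci * ei t + cj * ej t := by rw [hca, hcb]
    have hsame : ∀ k, (θ k + a k * qi t ^ (-(1/α₀)) + b k * qj t ^ (-(1/α₀))) ^ α
        = (θ k + u k t) ^ α := fun k => by
      simp only [hudef, heidef, hejdef]; rw [add_assoc]
    rw [Finset.sum_congr rfl fun k _ => hsame k, hsum1, hsum2]
    have hci' : ci * (ci * t)⁻¹ = t⁻¹ := by field_simp
    have hcj' : cj * (cj * t)⁻¹ = t⁻¹ := by field_simp
    have h2t : 2 / t = t⁻¹ + t⁻¹ := by ring
    rw [mul_sub, mul_sub, hci', hcj', h2t]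
    ring
  have part1 : (fun t : ℝ => Real.log (Fij (qi t) (qj t)) + 2 / t) =O[atTop]
      fun t : ℝ => t ^ (-2 : ℝ) :=
    hkey.trans_isBigO
      ((hsumR.add ((hEi.const_mul_left ci).add (hEj.const_mul_left cj))).neg_left)
  refine ⟨part1, ?_⟩
  -- part 2
  set L : ℝ → ℝ := fun t => Real.log (Fij (qi t) (qj t)) with hLdef
  have hLO : L =O[atTop] fun t : ℝ => t⁻¹ := by
    have h2t : (fun t : ℝ => 2 / t) =O[atTop] fun t : ℝ => t⁻¹ := by
      simp only [div_eq_mul_inv]; exact (isBigO_refl _ _).const_mul_left _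
    have : L = fun t => (L t + 2 / t) - 2 / t := by funext t; ring
    rw [this]; exact (part1.trans h2to1).sub h2t
  have hLtend : Tendsto L atTop (nhds 0) := hLO.trans_tendsto tendsto_inv_atTop_zero
  have hFeq : ∀ᶠ t in atTop, Fij (qi t) (qj t) = Real.exp (L t) := by
    filter_upwards [hqipos, hqjpos] with t hi hj
    have h := hFij (qi t) (qj t) hi hj
    rw [hLdef]; simp only; rw [h, Real.log_exp]
  have hsplit : (fun t : ℝ => t * (1 - 2 * (1 - 1/t) + Fij (qi t) (qj t))) =ᶠ[atTop]
      fun t => t * (Real.exp (L t) - 1 - L t) + t * (L t + 2 / t) := by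
    filter_upwards [hFeq, eventually_gt_atTop (0:ℝ)] with t hF ht
    rw [hF]
    field_simp
    ring
  have term1 : (fun t : ℝ => t * (Real.exp (L t) - 1 - L t)) =O[atTop]
      fun t : ℝ => t⁻¹ := by
    have h1 : (fun t : ℝ => t * (Real.exp (L t) - 1 - L t)) =O[atTop]
        fun t => t * (L t * L t) := by
      refine IsBigO.of_bound 1 ?_
      have habs : ∀ᶠ t in atTop, |L t| ≤ 1 := by
        have := hLtend (Metric.closedBall_mem_nhds (0:ℝ) one_pos)
        filter_upwards [this] with t ht
        simpa [Real.dist_eq] using ht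
      filter_upwards [habs] with t ht
      have h2 : |L t * L t| = L t ^ 2 := by rw [abs_mul, ← sq, sq_abs]
      rw [one_mul, Real.norm_eq_abs, Real.norm_eq_abs, abs_mul, abs_mul, h2]
      exact mul_le_mul_of_nonneg_left (Real.abs_exp_sub_one_sub_id_le ht) (abs_nonneg t)
    refine h1.trans ?_
    refine ((isBigO_refl (fun t : ℝ => t) atTop).mul ((hLO.mul hLO).trans Linv.isBigO)).trans
      (EventuallyEq.isBigO ?_)
    filter_upwards [eventually_gt_atTop (0:ℝ)] with t ht
    rw [Real.rpow_neg ht.le, show (2:ℝ)=((2:ℕ):ℝ) by norm_num, Real.rpow_natCast]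
    field_simp
  have term2 : (fun t : ℝ => t * (L t + 2 / t)) =O[atTop] fun t : ℝ => t⁻¹ := by
    refine ((isBigO_refl (fun t : ℝ => t) atTop).mul part1).trans (EventuallyEq.isBigO ?_)
    filter_upwards [eventually_gt_atTop (0:ℝ)] with t ht
    rw [Real.rpow_neg ht.le, show (2:ℝ)=((2:ℕ):ℝ) by norm_num, Real.rpow_natCast]
    field_simp
  have : (fun t => t * (Real.exp (L t) - 1 - L t) + t * (L t + 2 / t)) =O[atTop]
      fun t : ℝ => t⁻¹ := term1.add term2
  exact (Tendsto.congr' hsplit.symm) ((this).trans_tendsto tendsto_inv_atTop_zero)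
end

section
/- Let F be the n-dimensional joint distribution F(x₁,...,x_n) = exp[Σ_k θ_k^α - Σ_k {θ_k + τ^{1/α₀} Σ_j ω_{kj}^{1/α} x_j^{-1/α₀}}^α] with all θ_k > 0, and let F_j be its j-th marginal with quantile functions q_j. Then the extremal coefficient V(1,...,1) = lim_{t→∞} t(1 - F(q_1(t),...,q_n(t))) equals n; that is, all n components are jointly extremally independent. -/
open Real Filter Asymptotics

lemma aux_slope_s16 {f : ℝ → ℝ} {d : ℝ} (hf : HasDerivAt f d 0) (hf0 : f 0 = 0)
    {A : ℝ → ℝ} (hA : Tendsto A atTop (nhdsWithin 0 {0}ᶜ)) :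
    Tendsto (fun t => f (A t) / A t) atTop (nhds d) := by
  have h := (hasDerivAt_iff_tendsto_slope.mp hf).comp hA
  refine h.congr (fun t => ?_)
  simp [slope_def_field, hf0, div_eq_div_iff]

lemma aux_o {ψ : ℝ → ℝ} {d : ℝ} (hψ : HasDerivAt ψ d 0)
    {A : ℝ → ℝ} (hA0 : Tendsto A atTop (nhds 0)) {c : ℝ}
    (hA : Tendsto (fun t => t * A t) atTop (nhds c)) :
    Tendsto (fun t => t * (ψ (A t) - ψ 0 - d * A t)) atTop (nhds 0) := by
  have h1 : (fun x => ψ x - ψ 0 - (x - 0) • d) =o[nhds (0:ℝ)] fun x => x - 0 :=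
    hasDerivAt_iff_isLittleO.mp hψ
  have h2 := h1.comp_tendsto hA0
  have h3 : (fun t => t * (ψ (A t) - ψ 0 - d * A t)) =o[atTop]
      fun t => t * A t := by
    have h := (isBigO_refl (fun t : ℝ => t) atTop).mul_isLittleO h2
    refine h.congr (fun t => ?_) (fun t => ?_)
    · simp [Function.comp, mul_comm]
    · simp [Function.comp, mul_comm]
  have h4 : (fun t : ℝ => t * A t) =O[atTop] (fun _ => (1:ℝ)) := hA.isBigO_one ℝ
  exact isLittleO_one_iff ℝ |>.mp (h3.trans_isBigO h4)

set_option maxHeartbeats 1000000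
/-- When all tilting parameters are positive, the `n`-dimensional extremal coefficient
`V(1,…,1) = lim_{t→∞} t (1 - F(q_1(t),…,q_n(t)))` equals `n`: joint extremal independence. -/
theorem stmt16 (n K : ℕ) (α α₀ τ : ℝ) (hα : α ∈ Set.Ioo (0:ℝ) 1) (hα₀ : 0 < α₀) (hτ : 0 < τ)
    (w : Fin K → Fin n → ℝ) (hw : ∀ k j, 0 ≤ w k j) (hw' : ∀ j, ∃ k, 0 < w k j)
    (θ : Fin K → ℝ) (hθ : ∀ k, 0 < θ k)
    (F : (Fin n → ℝ) → ℝ)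
    (hF : ∀ x : Fin n → ℝ, (∀ j, 0 < x j) → F x =
      Real.exp ((∑ k, θ k ^ α) -
        ∑ k, (θ k + τ ^ (1/α₀) * ∑ j, w k j ^ (1/α) * x j ^ (-(1/α₀))) ^ α))
    (q : Fin n → ℝ → ℝ)
    (hq : ∀ j, ∀ t : ℝ, 1 < t → 0 < q j t ∧
      Real.exp ((∑ k, θ k ^ α) -
        ∑ k, (θ k + τ ^ (1/α₀) * w k j ^ (1/α) * (q j t) ^ (-(1/α₀))) ^ α) = 1 - 1/t) :
    Tendsto (fun t : ℝ => t * (1 - F (fun j => q j t))) atTop (nhds (n : ℝ)) := by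
  obtain ⟨hα0, hα1⟩ := hα
  -- notation
  set u : Fin K → Fin n → ℝ := fun k j => τ ^ (1/α₀) * w k j ^ (1/α) with hu_def
  have hu : ∀ k j, 0 ≤ u k j := fun k j =>
    mul_nonneg (rpow_nonneg hτ.le _) (rpow_nonneg (hw k j) _)
  have hu' : ∀ j, ∃ k, 0 < u k j := by
    intro j
    obtain ⟨k, hk⟩ := hw' j
    exact ⟨k, mul_pos (rpow_pos_of_pos hτ _) (rpow_pos_of_pos hk _)⟩
  set ε : Fin n → ℝ → ℝ := fun j t => q j t ^ (-(1/α₀)) with hε_def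
  have hεpos : ∀ j (t : ℝ), 1 < t → 0 < ε j t := fun j t ht =>
    rpow_pos_of_pos (hq j t ht).1 _
  set L : ℝ → ℝ := fun t => -Real.log (1 - 1/t) with hL_def
  set φ : Fin n → ℝ → ℝ :=
    fun j x => (∑ k, (θ k + u k j * x) ^ α) - ∑ k, θ k ^ α with hφ_def
  set A : Fin K → ℝ → ℝ := fun k t => ∑ j, u k j * ε j t with hA_def
  set Φ : ℝ → ℝ :=
    fun t => (∑ k, (θ k + A k t) ^ α) - ∑ k, θ k ^ α with hΦ_def
  -- basic facts about L
  have hsub : ∀ t : ℝ, 1 < t → 0 < 1 - 1/t ∧ 1 - 1/t < 1 := by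
    intro t ht
    have ht0 : 0 < t := lt_trans one_pos ht
    constructor
    · have : 1/t < 1 := by rw [div_lt_one ht0]; exact ht
      linarith
    · have : 0 < 1/t := by positivity
      linarith
  have hLpos : ∀ t : ℝ, 1 < t → 0 < L t := by
    intro t ht
    obtain ⟨h1, h2⟩ := hsub t ht
    simp only [hL_def, neg_pos]
    exact Real.log_neg h1 h2
  -- the quantile equation in terms of φ and L
  have hphiL : ∀ j (t : ℝ), 1 < t → φ j (ε j t) = L t := by
    intro j t ht
    have h := (hq j t ht).2
    have h2 := congrArg Real.log h
    rw [Real.log_exp] at h2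
    have : (∑ k, (θ k + u k j * ε j t) ^ α)
        = ∑ k, (θ k + τ ^ (1/α₀) * w k j ^ (1/α) * (q j t) ^ (-(1/α₀))) ^ α := by
      refine Finset.sum_congr rfl (fun k _ => ?_)
      simp [hu_def, hε_def, mul_assoc]
    simp only [hφ_def, hL_def, this]
    linarith
  -- L → 0 and t·L → 1
  have hL0 : Tendsto L atTop (nhds 0) := by
    have h1 : Tendsto (fun t : ℝ => 1 - 1/t) atTop (nhds 1) := by
      have := tendsto_inv_atTop_zero (𝕜 := ℝ)
      have h := tendsto_const_nhds (x := (1:ℝ)) (f := atTop).sub this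
      simpa [one_div] using h
    have h2 : Tendsto (fun t : ℝ => Real.log (1 - 1/t)) atTop (nhds 0) := by
      have := (Real.continuousAt_log (by norm_num : (1:ℝ) ≠ 0)).tendsto.comp h1
      simpa [Function.comp_def] using this
    simpa [hL_def] using h2.neg
  have hgL : HasDerivAt (fun x : ℝ => -Real.log (1 - x)) 1 0 := by
    have h1 : HasDerivAt (fun x : ℝ => 1 - x) (-1) 0 := by
      simpa using (hasDerivAt_id (0:ℝ)).const_sub 1
    have h2 := h1.log (by norm_num)
    have := h2.neg
    norm_num at this
    exact this
  have htL : Tendsto (fun t : ℝ => t * L t) atTop (nhds 1) := by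
    have hA1 : Tendsto (fun t : ℝ => 1/t) atTop (nhdsWithin 0 {0}ᶜ) := by
      rw [tendsto_nhdsWithin_iff]
      constructor
      · simpa [one_div] using tendsto_inv_atTop_zero (𝕜 := ℝ)
      · filter_upwards [eventually_gt_atTop (0:ℝ)] with t ht
        simp [ne_of_gt ht]
    have h := aux_slope_s16 hgL (by simp) hA1
    refine h.congr' ?_
    filter_upwards [eventually_gt_atTop (1:ℝ)] with t ht
    have ht0 : (0:ℝ) < t := lt_trans one_pos ht
    simp only [hL_def]
    field_simp
  -- properties of φ
  have hφ0 : ∀ j, φ j 0 = 0 := by intro j; simp [hφ_def]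
  have hφmono : ∀ j ⦃x y : ℝ⦄, 0 ≤ x → x ≤ y → φ j x ≤ φ j y := by
    intro j x y hx hxy
    simp only [hφ_def]
    refine sub_le_sub_right (Finset.sum_le_sum fun k _ => ?_) _
    refine Real.rpow_le_rpow ?_ ?_ hα0.le
    · have := mul_nonneg (hu k j) hx
      linarith [(hθ k).le]
    · nlinarith [hu k j, (hθ k).le]
  have hφpos : ∀ j (δ : ℝ), 0 < δ → 0 < φ j δ := by
    intro j δ hδ
    simp only [hφ_def, sub_pos]
    obtain ⟨k₀, hk₀⟩ := hu' j
    refine Finset.sum_lt_sum (fun k _ => ?_) ⟨k₀, Finset.mem_univ _, ?_⟩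
    · refine Real.rpow_le_rpow (hθ k).le ?_ hα0.le
      nlinarith [hu k j]
    · refine Real.rpow_lt_rpow (hθ k₀).le ?_ hα0
      nlinarith
  -- ε → 0
  have hε0 : ∀ j, Tendsto (ε j) atTop (nhds 0) := by
    intro j
    refine tendsto_order.2 ⟨fun a ha => ?_, fun b hb => ?_⟩
    · filter_upwards [eventually_gt_atTop (1:ℝ)] with t ht
      exact lt_trans ha (hεpos j t ht)
    · have hφb := hφpos j b hb
      filter_upwards [eventually_gt_atTop (1:ℝ), hL0.eventually (gt_mem_nhds hφb)]
        with t ht hLt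
      by_contra hcon
      push_neg at hcon
      have := hφmono j hb.le hcon
      rw [hphiL j t ht] at this
      linarith
  -- derivatives
  have hψd : ∀ k, HasDerivAt (fun x : ℝ => (θ k + x) ^ α) (α * θ k ^ (α-1)) 0 := by
    intro k
    have h1 : HasDerivAt (fun x : ℝ => θ k + x) 1 0 := (hasDerivAt_id 0).const_add (θ k)
    have h2 := h1.rpow_const (p := α) (Or.inl (by simpa using (hθ k).ne'))
    simpa using h2
  set d : Fin n → ℝ := fun j => ∑ k, u k j * (α * θ k ^ (α-1)) with hd_def
  have hdpos : ∀ j, 0 < d j := by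
    intro j
    obtain ⟨k₀, hk₀⟩ := hu' j
    refine Finset.sum_pos' (fun k _ => mul_nonneg (hu k j)
      (mul_nonneg hα0.le (rpow_nonneg (hθ k).le _))) ⟨k₀, Finset.mem_univ _, ?_⟩
    exact mul_pos hk₀ (mul_pos hα0 (rpow_pos_of_pos (hθ k₀) _))
  have hφd : ∀ j, HasDerivAt (φ j) (d j) 0 := by
    intro j
    have h : ∀ k, HasDerivAt (fun x : ℝ => (θ k + u k j * x) ^ α)
        (u k j * (α * θ k ^ (α-1))) 0 := by
      intro k
      have h1 : HasDerivAt (fun x : ℝ => θ k + u k j * x) (u k j) 0 := by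
        simpa using ((hasDerivAt_id (0:ℝ)).const_mul (u k j)).const_add (θ k)
      have h2 := h1.rpow_const (p := α) (Or.inl (by simpa using (hθ k).ne'))
      simpa [mul_comm, mul_assoc, mul_left_comm] using h2
    exact (HasDerivAt.fun_sum (fun k _ => h k)).sub_const _
  -- t·ε → 1/d
  have htε : ∀ j, Tendsto (fun t => t * ε j t) atTop (nhds (1 / d j)) := by
    intro j
    have hεne : Tendsto (ε j) atTop (nhdsWithin 0 {0}ᶜ) := by
      rw [tendsto_nhdsWithin_iff]
      refine ⟨hε0 j, ?_⟩
      filter_upwards [eventually_gt_atTop (1:ℝ)] with t ht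
      simp [ne_of_gt (hεpos j t ht)]
    have hslope := aux_slope_s16 (hφd j) (hφ0 j) hεne
    have hLε : Tendsto (fun t => L t / ε j t) atTop (nhds (d j)) := by
      refine hslope.congr' ?_
      filter_upwards [eventually_gt_atTop (1:ℝ)] with t ht
      rw [hphiL j t ht]
    have h := htL.div hLε (ne_of_gt (hdpos j))
    refine h.congr' ?_
    filter_upwards [eventually_gt_atTop (1:ℝ)] with t ht
    have h1 := hLpos t ht
    have h2 := hεpos j t ht
    rw [Pi.div_apply]
    field_simp
  -- A limits
  have hA0 : ∀ k, Tendsto (A k) atTop (nhds 0) := by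
    intro k
    have h := tendsto_finset_sum (Finset.univ : Finset (Fin n))
      (fun j _ => (hε0 j).const_mul (u k j))
    simp only [mul_zero, Finset.sum_const_zero] at h
    exact h
  have htA : ∀ k, Tendsto (fun t => t * A k t) atTop (nhds (∑ j, u k j * (1 / d j))) := by
    intro k
    have := tendsto_finset_sum (Finset.univ : Finset (Fin n))
      (fun j _ => (htε j).const_mul (u k j))
    refine this.congr (fun t => ?_)
    simp only [hA_def, Finset.mul_sum]
    exact Finset.sum_congr rfl (fun j _ => by ring)
  -- little-o terms
  have hOA : ∀ k, Tendsto (fun t =>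
      t * ((θ k + A k t) ^ α - θ k ^ α - (α * θ k ^ (α-1)) * A k t)) atTop (nhds 0) := by
    intro k
    have h := aux_o (hψd k) (hA0 k) (htA k)
    simp only [add_zero] at h
    exact h
  have hOB : ∀ k j, Tendsto (fun t =>
      t * ((θ k + u k j * ε j t) ^ α - θ k ^ α - (α * θ k ^ (α-1)) * (u k j * ε j t)))
      atTop (nhds 0) := by
    intro k j
    have hB0 : Tendsto (fun t => u k j * ε j t) atTop (nhds 0) := by
      have h := (hε0 j).const_mul (u k j)
      rw [mul_zero] at h
      exact h
    have hBt : Tendsto (fun t => t * (u k j * ε j t)) atTop (nhds (u k j * (1 / d j))) := by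
      refine ((htε j).const_mul (u k j)).congr (fun t => by ring)
    have h := aux_o (hψd k) hB0 hBt
    simp only [add_zero] at h
    exact h
  -- t·Φ → n
  have htΦ : Tendsto (fun t => t * Φ t) atTop (nhds (n : ℝ)) := by
    have h1 := tendsto_finset_sum (Finset.univ : Finset (Fin K)) (fun k _ => hOA k)
    have h2 := tendsto_finset_sum (Finset.univ : Finset (Fin n))
      (fun j _ => tendsto_finset_sum (Finset.univ : Finset (Fin K)) (fun k _ => hOB k j))
    have h3 := htL.const_mul (n : ℝ)
    have h := (h1.sub h2).add h3
    have hlim : ((∑ k : Fin K, (0:ℝ)) - ∑ j : Fin n, ∑ k : Fin K, (0:ℝ)) + (n:ℝ) * 1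
        = (n : ℝ) := by simp
    rw [hlim] at h
    refine h.congr' ?_
    filter_upwards [eventually_gt_atTop (1:ℝ)] with t ht
    have hnL : (n:ℝ) * (t * L t) = ∑ j : Fin n, t * φ j (ε j t) := by
      rw [Finset.sum_congr rfl (fun j _ => by rw [hphiL j t ht])]
      simp [Finset.sum_const, mul_assoc]
    rw [hnL]
    simp only [hφ_def, hΦ_def]
    have e1 : ∀ (j : Fin n), ∑ k : Fin K,
        t * ((θ k + u k j * ε j t) ^ α - θ k ^ α - (α * θ k ^ (α-1)) * (u k j * ε j t))
        = t * ((∑ k, (θ k + u k j * ε j t) ^ α) - ∑ k, θ k ^ α)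
          - ∑ k, t * ((α * θ k ^ (α-1)) * (u k j * ε j t)) := by
      intro j
      simp only [Finset.mul_sum, mul_sub, Finset.sum_sub_distrib]
    have e2 : ∑ k : Fin K,
        t * ((θ k + A k t) ^ α - θ k ^ α - (α * θ k ^ (α-1)) * A k t)
        = t * ((∑ k, (θ k + A k t) ^ α) - ∑ k, θ k ^ α)
          - ∑ k, t * ((α * θ k ^ (α-1)) * A k t) := by
      simp only [Finset.mul_sum, mul_sub, Finset.sum_sub_distrib]
    have e3 : ∑ k : Fin K, t * ((α * θ k ^ (α-1)) * A k t)
        = ∑ j : Fin n, ∑ k : Fin K, t * ((α * θ k ^ (α-1)) * (u k j * ε j t)) := by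
      rw [Finset.sum_comm]
      refine Finset.sum_congr rfl (fun k _ => ?_)
      simp only [hA_def, Finset.mul_sum]
    rw [e2, Finset.sum_congr rfl (fun j _ => e1 j), Finset.sum_sub_distrib, e3]
    ring
  -- Φ → 0
  have hΦ0 : Tendsto Φ atTop (nhds 0) := by
    have h := (tendsto_inv_atTop_zero (𝕜 := ℝ)).mul htΦ
    rw [zero_mul] at h
    refine h.congr' ?_
    filter_upwards [eventually_gt_atTop (0:ℝ)] with t ht
    field_simp
  have hexp : HasDerivAt (fun x : ℝ => Real.exp (-x)) (-1) 0 := by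
    have h := ((hasDerivAt_id (0:ℝ)).neg).exp
    norm_num at h
    exact h
  have hE := aux_o hexp hΦ0 htΦ
  have h := htΦ.sub hE
  rw [sub_zero] at h
  refine h.congr' ?_
  filter_upwards [eventually_gt_atTop (1:ℝ)] with t ht
  have hFq : F (fun j => q j t) = Real.exp (-Φ t) := by
    rw [hF _ (fun j => (hq j t ht).1)]
    have hin : ∀ k : Fin K, τ ^ (1/α₀) * ∑ j, w k j ^ (1/α) * (q j t) ^ (-(1/α₀))
        = A k t := by
      intro k
      simp only [hA_def, hu_def, hε_def, Finset.mul_sum]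
      exact Finset.sum_congr rfl (fun j _ => by ring)
    have hsum : (∑ k : Fin K,
        (θ k + τ ^ (1/α₀) * ∑ j, w k j ^ (1/α) * (q j t) ^ (-(1/α₀))) ^ α)
        = ∑ k, (θ k + A k t) ^ α :=
      Finset.sum_congr rfl (fun k _ => by rw [hin k])
    rw [hsum]
    congr 1
    simp only [hΦ_def]
    ring
  rw [hFq]
  simp only [neg_zero, Real.exp_zero]
  ring
end
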